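/- arXiv:2303.18077 — 4 statements merged into one kernel-verified Lean document; each statement's English description precedes it below -/
import Mathlib

section
/- For all integers m ≥ 1 and n ≥ 1, the map sending an m-Dyck path of D_{m,n} to the 1-Dyck path of D_{1,mn} obtained by replacing each letter 1 by m consecutive letters 1 is an order isomorphism from D_{m,n} with the greedy m-Tamari order onto the subposet of D_{1,mn}, with the greedy 1-Tamari order, consisting of those 1-Dyck paths in which the length of every ascent (maximal run of consecutive letters 1) is a multiple of m; moreover this subset is an upper ideal of D_{1,mn} for the greedy 1-Tamari order (closed upward under the order). -/
/-! Words over `Bool` encode lattice paths: `true` = up step (letter 1),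
`false` = down step (letter 0). -/

/-- `w` is an `m`-Dyck word: the number of 0's is `m` times the number of 1's,
and every prefix `p` satisfies `m·|p|₁ ≥ |p|₀`.  (The empty word is allowed;
an `m`-Dyck path of size `n` is an `m`-Dyck word with `n` letters 1.) -/
def IsDyck (m : ℕ) (w : List Bool) : Prop :=
  w.count false = m * w.count true ∧
  ∀ p : List Bool, p <+: w → p.count false ≤ m * p.count true

/-- Cover relation of the greedy `m`-Tamari order: swap a valley's down step with
the *longest* Dyck factor that follows it. -/
def GreedyCover (m : ℕ) (w w' : List Bool) : Prop :=
  ∃ u d v : List Bool, d ≠ [] ∧ IsDyck m d ∧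
    w = u ++ false :: (d ++ v) ∧
    w' = u ++ d ++ false :: v ∧
    ∀ d' : List Bool, d' <+: d ++ v → IsDyck m d' → d'.length ≤ d.length

/-- The greedy `m`-Tamari order (reflexive-transitive closure of the cover relation). -/
def GreedyLe (m : ℕ) : List Bool → List Bool → Prop :=
  Relation.ReflTransGen (GreedyCover m)

/-- Cover relation of the ordinary `m`-Tamari order: swap a valley's down step with
the *shortest nonempty* Dyck factor that follows it. -/
def OrdCover (m : ℕ) (w w' : List Bool) : Prop :=
  ∃ u d v : List Bool, d ≠ [] ∧ IsDyck m d ∧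
    w = u ++ false :: (d ++ v) ∧
    w' = u ++ d ++ false :: v ∧
    ∀ d' : List Bool, d' <+: d ++ v → IsDyck m d' → d' ≠ [] → d.length ≤ d'.length

/-- The ordinary `m`-Tamari order. -/
def OrdLe (m : ℕ) : List Bool → List Bool → Prop :=
  Relation.ReflTransGen (OrdCover m)

/-- The word `1·0^m` (a single peak), unit of the monoid `(D_m, *)`. -/
def peakWord (m : ℕ) : List Bool := true :: List.replicate m false

/-- Length of the final descent: the longest suffix of the form `0^k`. -/
def finalDescent (w : List Bool) : ℕ := (w.reverse.takeWhile (fun b => !b)).length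

/-- The product `w₁ * w₂` on nonempty `m`-Dyck words: replace the rightmost peak
(the last up step together with the `m` down steps following it) of `w₁` by `w₂`. -/
def star (m : ℕ) (w₁ w₂ : List Bool) : List Bool :=
  w₁.take (w₁.length - (finalDescent w₁ + 1)) ++ w₂ ++
    List.replicate (finalDescent w₁ - m) false

/-- Delete the last peak (the last up step and the `m` down steps following it). -/
def delPeak (m : ℕ) (w : List Bool) : List Bool :=
  w.take (w.length - (finalDescent w + 1)) ++ List.replicate (finalDescent w - m) false

/-- `D(w₀, …, w_m) = 1 (w₀ 0) (w₁ 0) ⋯ (w_{m-1} 0) w_m` : the canonical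
decomposition of nonempty `m`-Dyck words (components indexed by `Fin (m+1)`). -/
def Dpath (m : ℕ) (ws : Fin (m+1) → List Bool) : List Bool :=
  true :: ((List.ofFn fun j : Fin m => ws j.castSucc ++ [false]).flatten ++ ws (Fin.last m))

/-- Generators of the free monoid `(D_m, *)` : the words
`D(w₁,…,w_{i−1}, 1·0^m, ∅,…,∅)` with Dyck (possibly empty) components before
position `i`. -/
def IsGenerator (m : ℕ) (g : List Bool) : Prop :=
  ∃ i : Fin (m+1), ∃ ws : Fin (m+1) → List Bool,
    (∀ j, IsDyck m (ws j)) ∧ ws i = peakWord m ∧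
    (∀ j : Fin (m+1), i < j → ws j = []) ∧ g = Dpath m ws

/-- A prime (no contact) nonempty `m`-Dyck word: no proper nonempty prefix `p`
satisfies `m·|p|₁ = |p|₀`. -/
def IsPrimePath (m : ℕ) (w : List Bool) : Prop :=
  IsDyck m w ∧ w ≠ [] ∧
  ∀ p : List Bool, p <+: w → p ≠ [] → p ≠ w → p.count false ≠ m * p.count true

/-- Replace each letter 1 by `m` consecutive letters 1 (and keep the letters 0). -/
def embed (m : ℕ) (w : List Bool) : List Bool :=
  w.flatMap fun b => if b then List.replicate m true else [false]

/-- Every ascent (maximal run of letters 1) of `w` has length divisible by `m`. -/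
def AscentsMultiple (m : ℕ) (w : List Bool) : Prop :=
  ∀ (u v : List Bool) (k : ℕ), w = u ++ List.replicate k true ++ v →
    u.getLast? ≠ some true → v.head? ≠ some true → m ∣ k

/-! A letter `1` of `v` becomes a block `1^m` of `embed m v`, so a cut of `embed m v` falls either
between the images of two letters or strictly inside such a block. A nonempty Dyck word ends with
a letter `0`, hence a Dyck prefix of `embed m v` can only end between images of letters: the Dyck
factors of `embed m v` are exactly the images of the Dyck factors of `v`, and the valleys of
`embed m v` are those of `v`. Therefore the greedy covers of `embed m v` are exactly the images of
the greedy covers of `v`. Finally, the words all of whose ascents have length divisible by `m` are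
exactly the images of `embed m`, so a greedy cover never leaves this set. -/
open List

lemma List.prefix_append_or {α : Type*} {p l₁ l₂ : List α} (h : p <+: l₁ ++ l₂) :
    p <+: l₁ ∨ ∃ r, r <+: l₂ ∧ p = l₁ ++ r := by
  obtain ⟨s, hs⟩ := h
  rcases append_eq_append_iff.1 hs with ⟨a, rfl, -⟩ | ⟨b, rfl, rfl⟩
  · exact .inl (prefix_append p a)
  · exact .inr ⟨b, prefix_append b s, rfl⟩

lemma List.perm_append_append_cons {α : Type*} (u d v : List α) (a : α) :
    u ++ d ++ a :: v ~ u ++ a :: (d ++ v) := by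
  rw [append_assoc]
  exact perm_middle.append_left u

section Embed

variable {m : ℕ}

@[simp] lemma embed_nil (m : ℕ) : embed m [] = [] := rfl

@[simp] lemma embed_cons_true (m : ℕ) (l : List Bool) :
    embed m (true :: l) = replicate m true ++ embed m l := rfl

@[simp] lemma embed_cons_false (m : ℕ) (l : List Bool) :
    embed m (false :: l) = false :: embed m l := rfl

@[simp] lemma embed_append (m : ℕ) (l₁ l₂ : List Bool) :
    embed m (l₁ ++ l₂) = embed m l₁ ++ embed m l₂ := flatMap_append

@[simp] lemma count_true_embed (m : ℕ) (l : List Bool) :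
    (embed m l).count true = m * l.count true := by
  induction l with
  | nil => rfl
  | cons b l ih => cases b <;> simp [ih, mul_add, add_comm]

@[simp] lemma count_false_embed (m : ℕ) (l : List Bool) :
    (embed m l).count false = l.count false := by
  induction l with
  | nil => rfl
  | cons b l ih => cases b <;> simp [ih, count_replicate]

lemma embed_replicate_true (m q : ℕ) : embed m (replicate q true) = replicate (m * q) true := by
  induction q with
  | zero => rfl
  | succ q ih => rw [replicate_succ, embed_cons_true, ih, mul_add_one, add_comm, replicate_add]

lemma embed_injective (hm : 0 < m) : Function.Injective (embed m) := by
  obtain ⟨m, rfl⟩ : ∃ k, m = k + 1 := ⟨m - 1, by omega⟩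
  intro a b h
  induction a generalizing b with
  | nil => cases b with
    | nil => rfl
    | cons c b => cases c <;> simp [replicate_succ] at h
  | cons c a ih => cases b with
    | nil => cases c <;> simp [replicate_succ] at h
    | cons c' b => cases c <;> cases c' <;> simp [replicate_succ] at h ⊢ <;> exact ih h

lemma embed_prefix_embed {a b : List Bool} (h : a <+: b) : embed m a <+: embed m b := by
  obtain ⟨s, rfl⟩ := h
  exact ⟨embed m s, (embed_append m a s).symm⟩

lemma embed_eq_append {v p s : List Bool} (h : embed m v = p ++ s) :
    (∃ v₁ v₂, v = v₁ ++ v₂ ∧ p = embed m v₁ ∧ s = embed m v₂) ∨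
    ∃ v₁ v₂ k, v = v₁ ++ true :: v₂ ∧ 0 < k ∧ k < m ∧
      p = embed m v₁ ++ replicate k true ∧ s = replicate (m - k) true ++ embed m v₂ := by
  induction v generalizing p with
  | nil =>
    obtain ⟨rfl, rfl⟩ := append_eq_nil_iff.1 h.symm
    exact .inl ⟨[], [], rfl, rfl, rfl⟩
  | cons b t ih =>
    rcases p with _ | ⟨x, p⟩
    · exact .inl ⟨[], b :: t, rfl, rfl, h.symm⟩
    cases b with
    | false =>
      simp only [embed_cons_false, cons_append, cons.injEq] at h
      obtain ⟨rfl, h⟩ := h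
      rcases ih h with ⟨v₁, v₂, rfl, rfl, rfl⟩ | ⟨v₁, v₂, k, rfl, hk, hkm, rfl, rfl⟩
      · exact .inl ⟨false :: v₁, v₂, rfl, rfl, rfl⟩
      · exact .inr ⟨false :: v₁, v₂, k, rfl, hk, hkm, rfl, rfl⟩
    | true =>
      rcases append_eq_append_iff.1 h with ⟨a, hp, ht⟩ | ⟨c, hc, rfl⟩
      · rcases ih ht with ⟨v₁, v₂, rfl, rfl, rfl⟩ | ⟨v₁, v₂, k, rfl, hk, hkm, rfl, rfl⟩
        · exact .inl ⟨true :: v₁, v₂, rfl, hp, rfl⟩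
        · exact .inr ⟨true :: v₁, v₂, k, rfl, hk, hkm, by simp [hp], rfl⟩
      · obtain ⟨hlen, hx, hc'⟩ := replicate_eq_append_iff.1 hc
        rcases c with _ | ⟨y, c⟩
        · exact .inl ⟨[true], t, rfl, by simpa using hc.symm, rfl⟩
        · simp only [length_cons] at hlen hx hc'
          refine .inr ⟨[], t, p.length + 1, rfl, p.length.succ_pos, by omega, hx, ?_⟩
          rw [hc', show c.length + 1 = m - (p.length + 1) by omega]
          rfl

lemma not_isDyck_append_true (hm : 0 < m) (l : List Bool) : ¬ IsDyck m (l ++ [true]) := by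
  rintro ⟨hcount, hprefix⟩
  have := hprefix l (prefix_append l [true])
  have hfalse : (l ++ [true]).count false = l.count false := by simp
  have htrue : (l ++ [true]).count true = l.count true + 1 := by simp
  rw [hfalse, htrue, mul_add_one] at hcount
  omega

lemma embed_eq_append_of_isDyck {v p s : List Bool} (h : embed m v = p ++ s) (hp : IsDyck 1 p) :
    ∃ v₁ v₂, v = v₁ ++ v₂ ∧ p = embed m v₁ ∧ s = embed m v₂ := by
  rcases embed_eq_append h with h | ⟨v₁, v₂, k, -, hk, -, rfl, -⟩
  · exact h
  · obtain ⟨k, rfl⟩ := Nat.exists_eq_add_of_lt hk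
    rw [replicate_succ', ← append_assoc] at hp
    exact absurd hp (not_isDyck_append_true one_pos _)

lemma embed_eq_append_false_cons (hm : 0 < m) {v u s : List Bool}
    (h : embed m v = u ++ false :: s) :
    ∃ u₀ s₀, v = u₀ ++ false :: s₀ ∧ u = embed m u₀ ∧ s = embed m s₀ := by
  rcases embed_eq_append h with ⟨u₀, (_ | ⟨_ | _, s₀⟩), rfl, rfl, h⟩ | ⟨_, _, k, -, -, hkm, -, hs⟩
  · simp at h
  · exact ⟨u₀, s₀, rfl, rfl, by simpa using h.symm⟩
  · obtain ⟨m, rfl⟩ := Nat.exists_eq_add_of_lt hm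
    simp [replicate_succ] at h
  · obtain ⟨j, hj⟩ := Nat.exists_eq_add_of_lt hkm
    rw [show m - k = j + 1 by omega, replicate_succ] at hs
    simp at hs

lemma embed_prefix_embed_iff (hm : 0 < m) {a b : List Bool} :
    embed m a <+: embed m b ↔ a <+: b := by
  refine ⟨fun ⟨s, hs⟩ => ?_, embed_prefix_embed⟩
  rcases embed_eq_append hs.symm with ⟨v₁, v₂, rfl, he, -⟩ | ⟨v₁, v₂, k, -, hk, hkm, he, -⟩
  · exact embed_injective hm he ▸ prefix_append v₁ v₂
  · -- counting letters `1`, `m` would divide `0 < k < m`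
    have hcount := congrArg (count true) he
    simp only [count_true_embed, count_append, count_replicate_self] at hcount
    have : m ∣ k := (Nat.dvd_add_right (dvd_mul_right m _)).1 (hcount ▸ dvd_mul_right m _)
    exact absurd (Nat.le_of_dvd hk this) (by omega)

lemma isDyck_embed_iff {v : List Bool} : IsDyck 1 (embed m v) ↔ IsDyck m v := by
  refine ⟨fun ⟨hcount, hprefix⟩ => ⟨by simpa using hcount, fun p hp => ?_⟩,
    fun ⟨hcount, hprefix⟩ => ⟨by simpa using hcount, fun p ⟨s, hs⟩ => ?_⟩⟩
  · simpa using hprefix _ (embed_prefix_embed hp)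
  · rcases embed_eq_append hs.symm with ⟨v₁, v₂, rfl, rfl, -⟩ | ⟨v₁, v₂, k, rfl, -, -, rfl, -⟩
    · simpa using hprefix v₁ (prefix_append v₁ v₂)
    · simpa [count_replicate] using (hprefix v₁ (prefix_append v₁ _)).trans (Nat.le_add_right _ k)

end Embed

section Greedy

variable {m : ℕ}

/-- Every prefix of the new word is dominated by a prefix of the old one with the same number of
letters `1` and at least as many letters `0`. -/
lemma IsDyck.move_false_right {u d v : List Bool} (h : IsDyck m (u ++ false :: (d ++ v))) :
    IsDyck m (u ++ d ++ false :: v) := by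
  obtain ⟨hcount, hprefix⟩ := h
  have hperm := perm_append_append_cons u d v false
  refine ⟨by rwa [hperm.count_eq, hperm.count_eq], fun p hp => ?_⟩
  suffices ∃ q, q <+: u ++ false :: (d ++ v) ∧ q.count true = p.count true ∧
      p.count false ≤ q.count false by
    obtain ⟨q, hq, htrue, hfalse⟩ := this
    have := hprefix q hq
    rw [htrue] at this
    omega
  rw [append_assoc] at hp
  rcases prefix_append_or hp with hpu | ⟨r, hr, rfl⟩
  · exact ⟨p, hpu.trans (prefix_append _ _), rfl, le_rfl⟩
  rcases prefix_append_or hr with hrd | ⟨r', hr', rfl⟩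
  · exact ⟨u ++ false :: r, by simpa using hrd.trans (prefix_append d v), by simp, by simp⟩
  rcases prefix_cons_iff.1 hr' with rfl | ⟨t, rfl, ht⟩
  · exact ⟨u ++ false :: d, by simp, by simp, by simp⟩
  · have hperm : u ++ (d ++ false :: t) ~ u ++ false :: (d ++ t) := perm_middle.append_left u
    exact ⟨_, by simpa using ht, (hperm.count_eq true).symm, (hperm.count_eq false).le⟩

lemma GreedyCover.isDyck {w w' : List Bool} (hw : IsDyck m w) (h : GreedyCover m w w') :
    IsDyck m w' := by
  obtain ⟨u, d, v, -, -, rfl, rfl, -⟩ := h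
  exact hw.move_false_right

lemma GreedyCover.count_eq {w w' : List Bool} (h : GreedyCover m w w') (b : Bool) :
    w'.count b = w.count b := by
  obtain ⟨u, d, v, -, -, rfl, rfl, -⟩ := h
  exact (perm_append_append_cons u d v false).count_eq b

lemma GreedyLe.isDyck {w w' : List Bool} (hw : IsDyck m w) (h : GreedyLe m w w') :
    IsDyck m w' := by
  induction h with
  | refl => exact hw
  | tail _ hc ih => exact hc.isDyck ih

lemma GreedyLe.count_eq {w w' : List Bool} (h : GreedyLe m w w') (b : Bool) :
    w'.count b = w.count b := by
  induction h with
  | refl => rfl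
  | tail _ hc ih => exact (hc.count_eq b).trans ih

lemma GreedyCover.map_embed (hm : 0 < m) {w w' : List Bool} (h : GreedyCover m w w') :
    GreedyCover 1 (embed m w) (embed m w') := by
  obtain ⟨u, d, v, hdne, hd, rfl, rfl, hmax⟩ := h
  refine ⟨embed m u, embed m d, embed m v, fun h => hdne (embed_injective hm h),
    isDyck_embed_iff.2 hd, by simp, by simp, fun d'' ⟨s, hs⟩ hd'' => ?_⟩
  rw [← embed_append] at hs
  obtain ⟨v₁, v₂, hv, rfl, -⟩ := embed_eq_append_of_isDyck hs.symm hd''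
  have hv₁ : v₁ <+: d ++ v := ⟨v₂, hv.symm⟩
  have hlen := hmax v₁ hv₁ (isDyck_embed_iff.1 hd'')
  exact (embed_prefix_embed (prefix_of_prefix_length_le hv₁ (prefix_append d v) hlen)).length_le

lemma GreedyCover.exists_of_embed (hm : 0 < m) {v y : List Bool}
    (h : GreedyCover 1 (embed m v) y) : ∃ v', y = embed m v' ∧ GreedyCover m v v' := by
  obtain ⟨u, d, t, hdne, hd, hv, rfl, hmax⟩ := h
  obtain ⟨u₀, s₀, rfl, rfl, hs⟩ := embed_eq_append_false_cons hm hv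
  obtain ⟨d₀, t₀, rfl, rfl, rfl⟩ := embed_eq_append_of_isDyck hs.symm hd
  refine ⟨u₀ ++ d₀ ++ false :: t₀, by simp, u₀, d₀, t₀, by rintro rfl; exact hdne rfl,
    isDyck_embed_iff.1 hd, rfl, rfl, fun d' hd' hdd' => ?_⟩
  have hpre : embed m d' <+: embed m d₀ ++ embed m t₀ := by
    simpa using embed_prefix_embed (m := m) hd'
  have hlen := hmax _ hpre (isDyck_embed_iff.2 hdd')
  exact ((embed_prefix_embed_iff hm).1
    (prefix_of_prefix_length_le hpre (prefix_append _ _) hlen)).length_le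

lemma GreedyLe.map_embed (hm : 0 < m) {v w : List Bool} (h : GreedyLe m v w) :
    GreedyLe 1 (embed m v) (embed m w) :=
  Relation.ReflTransGen.lift (embed m) (fun _ _ hc => GreedyCover.map_embed hm hc) _ _ h

lemma GreedyLe.exists_of_embed (hm : 0 < m) {v y : List Bool} (h : GreedyLe 1 (embed m v) y) :
    ∃ v', y = embed m v' ∧ GreedyLe m v v' := by
  induction h with
  | refl => exact ⟨v, rfl, .refl⟩
  | tail _ hc ih =>
    obtain ⟨x, rfl, hvx⟩ := ih
    obtain ⟨x', rfl, hc'⟩ := hc.exists_of_embed hm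
    exact ⟨x', rfl, .tail hvx hc'⟩

lemma greedyLe_embed_iff (hm : 0 < m) {v w : List Bool} :
    GreedyLe 1 (embed m v) (embed m w) ↔ GreedyLe m v w := by
  refine ⟨fun h => ?_, GreedyLe.map_embed hm⟩
  obtain ⟨x, hx, hvx⟩ := h.exists_of_embed hm
  rwa [embed_injective hm hx]

end Greedy

section Ascents

variable {m : ℕ}

lemma ascentsMultiple_embed (v : List Bool) : AscentsMultiple m (embed m v) := by
  intro u t k h hu ht
  rw [append_assoc] at h
  rcases embed_eq_append h with ⟨_, v₂, -, rfl, hs⟩ | ⟨_, _, j, -, hj, -, rfl, -⟩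
  · rcases embed_eq_append hs.symm with ⟨w, _, -, hw, -⟩ | ⟨_, _, i, -, -, him, -, rfl⟩
    · exact ⟨w.count true, by simpa using congrArg (count true) hw⟩
    · obtain ⟨j, hj⟩ := Nat.exists_eq_add_of_lt him
      rw [show m - i = j + 1 by omega] at ht
      simp [replicate_succ] at ht
  · obtain ⟨j, rfl⟩ := Nat.exists_eq_add_of_lt hj
    simp [replicate_succ'] at hu

lemma AscentsMultiple.of_append_false_cons {a t : List Bool}
    (h : AscentsMultiple m (a ++ false :: t)) : AscentsMultiple m t := by
  intro u v k ht hu hv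
  refine h (a ++ false :: u) v k (by simp [ht]) ?_ hv
  rw [getLast?_append, getLast?_cons]
  cases hlast : u.getLast? <;> simp_all

lemma exists_eq_replicate_true_append (w : List Bool) :
    ∃ k r, w = replicate k true ++ r ∧ r.head? ≠ some true := by
  induction w with
  | nil => exact ⟨0, [], rfl, by simp⟩
  | cons b t ih =>
    cases b with
    | false => exact ⟨0, false :: t, rfl, by simp⟩
    | true =>
      obtain ⟨k, r, rfl, hr⟩ := ih
      exact ⟨k + 1, r, rfl, hr⟩

lemma AscentsMultiple.exists_embed {w : List Bool} (h : AscentsMultiple m w) :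
    ∃ x, embed m x = w := by
  induction hlen : w.length using Nat.strong_induction_on generalizing w with
  | _ n ih =>
  obtain ⟨k, r, rfl, hr⟩ := exists_eq_replicate_true_append w
  obtain ⟨q, rfl⟩ := h [] r k (by simp) (by simp) hr
  rcases r with _ | ⟨_ | _, r⟩
  · exact ⟨replicate q true, by simp [embed_replicate_true]⟩
  · have hr : r.length < n := by
      simp only [← hlen, length_append, length_replicate, length_cons]
      omega
    obtain ⟨x, rfl⟩ := ih r.length hr h.of_append_false_cons rfl
    exact ⟨replicate q true ++ false :: x, by simp [embed_replicate_true]⟩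
  · simp at hr

end Ascents

theorem greedy_embed_order_iso_general (m n : ℕ) (hm : 1 ≤ m) :
    -- `embed` is order-preserving and order-reflecting on `D_{m,n}`
    (∀ v w : List Bool, IsDyck m v → v.count true = n → IsDyck m w → w.count true = n →
        (GreedyLe m v w ↔ GreedyLe 1 (embed m v) (embed m w))) ∧
    -- `embed` is injective on `D_{m,n}`
    (∀ v w : List Bool, IsDyck m v → v.count true = n → IsDyck m w → w.count true = n →
        embed m v = embed m w → v = w) ∧
    -- the image of `D_{m,n}` is contained in the prescribed subset of `D_{1,mn}`
    (∀ v : List Bool, IsDyck m v → v.count true = n →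
        IsDyck 1 (embed m v) ∧ (embed m v).count true = m * n ∧ AscentsMultiple m (embed m v)) ∧
    -- every element of the prescribed subset of `D_{1,mn}` is in the image of `D_{m,n}`
    (∀ w' : List Bool, IsDyck 1 w' → w'.count true = m * n → AscentsMultiple m w' →
        ∃ v : List Bool, IsDyck m v ∧ v.count true = n ∧ embed m v = w') ∧
    -- the subset is an upper ideal of `D_{1,mn}` for the greedy 1-Tamari order
    (∀ w w' : List Bool, IsDyck 1 w → w.count true = m * n → AscentsMultiple m w →
        GreedyLe 1 w w' →
        IsDyck 1 w' ∧ w'.count true = m * n ∧ AscentsMultiple m w') := by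
  refine ⟨fun v w _ _ _ _ => (greedyLe_embed_iff hm).symm,
    fun v w _ _ _ _ h => embed_injective hm h,
    fun v hv hn => ⟨isDyck_embed_iff.2 hv, by simp [hn], ascentsMultiple_embed v⟩,
    fun w hw hn hasc => ?_, fun w w' hw hn hasc hle => ?_⟩
  · obtain ⟨v, rfl⟩ := hasc.exists_embed
    rw [count_true_embed] at hn
    exact ⟨v, isDyck_embed_iff.1 hw, Nat.eq_of_mul_eq_mul_left hm hn, rfl⟩
  · obtain ⟨v, rfl⟩ := hasc.exists_embed
    obtain ⟨v', rfl, -⟩ := hle.exists_of_embed hm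
    exact ⟨hle.isDyck hw, (hle.count_eq true).trans hn, ascentsMultiple_embed v'⟩

/-- `embed` is an order isomorphism from `D_{m,n}` with the greedy
`m`-Tamari order onto the subposet of `D_{1,mn}` (greedy 1-Tamari order) consisting of
the paths all of whose ascents have length divisible by `m`; moreover this subset is an
upper ideal of `D_{1,mn}`. -/
theorem greedy_embed_order_iso (m n : ℕ) (hm : 1 ≤ m) (hn : 1 ≤ n) :
    -- `embed` is order-preserving and order-reflecting on `D_{m,n}`
    (∀ v w : List Bool, IsDyck m v → v.count true = n → IsDyck m w → w.count true = n →
        (GreedyLe m v w ↔ GreedyLe 1 (embed m v) (embed m w))) ∧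
    -- `embed` is injective on `D_{m,n}`
    (∀ v w : List Bool, IsDyck m v → v.count true = n → IsDyck m w → w.count true = n →
        embed m v = embed m w → v = w) ∧
    -- the image of `D_{m,n}` is contained in the prescribed subset of `D_{1,mn}`
    (∀ v : List Bool, IsDyck m v → v.count true = n →
        IsDyck 1 (embed m v) ∧ (embed m v).count true = m * n ∧ AscentsMultiple m (embed m v)) ∧
    -- every element of the prescribed subset of `D_{1,mn}` is in the image of `D_{m,n}`
    (∀ w' : List Bool, IsDyck 1 w' → w'.count true = m * n → AscentsMultiple m w' →
        ∃ v : List Bool, IsDyck m v ∧ v.count true = n ∧ embed m v = w') ∧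
    -- the subset is an upper ideal of `D_{1,mn}` for the greedy 1-Tamari order
    (∀ w w' : List Bool, IsDyck 1 w → w.count true = m * n → AscentsMultiple m w →
        GreedyLe 1 w w' →
        IsDyck 1 w' ∧ w'.count true = m * n ∧ AscentsMultiple m w') :=
  greedy_embed_order_iso_general m n hm
end

section
/- Let v and w be m-Dyck paths of the same size. If v ⋖ w is a cover relation of the greedy m-Tamari order, then v ≤ w in the ordinary m-Tamari order. Consequently, if v ≤ w in the greedy m-Tamari order, then v ≤ w in the ordinary m-Tamari order; in other words, every greedy m-Tamari interval is also an interval of the ordinary m-Tamari order. -/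
/-- Split a nonempty Dyck word into a prime prefix and a Dyck tail. -/
lemma exists_prime_split (m : ℕ) (w : List Bool) (hw : IsDyck m w) (hne : w ≠ []) :
    ∃ p t : List Bool, w = p ++ t ∧ IsPrimePath m p ∧ IsDyck m t ∧ t.length < w.length := by
  classical
  set P : ℕ → Prop := fun n => n ≠ 0 ∧ (w.take n).count false = m * (w.take n).count true with hP
  have hPlen : P w.length := by
    constructor
    · simpa using List.length_pos_iff.2 hne |>.ne'
    · simpa [List.take_length] using hw.1
  have hex : ∃ n, P n := ⟨w.length, hPlen⟩
  set n₀ := Nat.find hex with hn₀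
  have hspec : P n₀ := Nat.find_spec hex
  have hmin : ∀ k, k < n₀ → ¬ P k := fun k hk => Nat.find_min hex hk
  have hle : n₀ ≤ w.length := Nat.find_le hPlen
  set p := w.take n₀ with hp
  set t := w.drop n₀ with ht
  have hsplit : w = p ++ t := by rw [hp, ht]; exact (List.take_append_drop n₀ w).symm
  have hplen : p.length = n₀ := by rw [hp]; simp [hle]
  have hppre : p <+: w := by rw [hp]; exact List.take_prefix _ _
  have hpc : p.count false = m * p.count true := by rw [hp]; exact hspec.2
  have hqtake : ∀ q : List Bool, q <+: w → w.take q.length = q :=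
    fun q hq => (List.prefix_iff_eq_take.1 hq).symm
  clear_value p t
  have hpdyck : IsDyck m p := ⟨hpc, fun q hq => hw.2 q (hq.trans hppre)⟩
  have hpne : p ≠ [] := by
    intro h
    exact hspec.1 (by simpa [h] using hplen.symm)
  have hcounts : p.count false + t.count false = m * p.count true + m * t.count true := by
    have h1 : w.count false = p.count false + t.count false := by
      rw [hsplit]; simp [List.count_append]
    have h2 : w.count true = p.count true + t.count true := by
      rw [hsplit]; simp [List.count_append]
    have h3 := hw.1
    rw [h1, h2, Nat.mul_add] at h3
    have := hpc
    omega
  have htdyck : IsDyck m t := by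
    constructor
    · omega
    · intro q hq
      have hpq : p ++ q <+: w := by
        rw [hsplit]; exact ⟨hq.choose, by rw [List.append_assoc, hq.choose_spec]⟩
      have h5 := hw.2 (p ++ q) hpq
      simp only [List.count_append, Nat.mul_add] at h5
      omega
  refine ⟨p, t, hsplit, ⟨hpdyck, hpne, ?_⟩, htdyck, ?_⟩
  · intro q hq hqne hqp heq
    have hqw : q <+: w := hq.trans hppre
    have hqlt : q.length < n₀ := by
      have h1 : q.length ≤ p.length := hq.length_le
      rcases lt_or_eq_of_le h1 with h | h
      · omega
      · exact absurd (hq.eq_of_length h) hqp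
    refine hmin q.length hqlt ⟨by simpa using List.length_pos_iff.2 hqne |>.ne', ?_⟩
    rw [hqtake q hqw]; exact heq
  · have : w.length = p.length + t.length := by rw [hsplit]; simp
    have hn0pos : 0 < n₀ := Nat.pos_of_ne_zero hspec.1
    omega

/-- Every Dyck word is a concatenation of prime Dyck words. -/
lemma exists_prime_factorization (m : ℕ) (w : List Bool) (hw : IsDyck m w) :
    ∃ L : List (List Bool), (∀ p ∈ L, IsPrimePath m p) ∧ L.flatten = w := by
  suffices H : ∀ n (w : List Bool), w.length = n → IsDyck m w →
      ∃ L : List (List Bool), (∀ p ∈ L, IsPrimePath m p) ∧ L.flatten = w from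
    H w.length w rfl hw
  intro n
  induction n using Nat.strong_induction_on with
  | _ n ih =>
    intro w hn hw
    by_cases hne : w = []
    · exact ⟨[], by simp, by simp [hne]⟩
    · obtain ⟨p, t, hsplit, hp, ht, hlt⟩ := exists_prime_split m w hw hne
      obtain ⟨L, hL, hflat⟩ := ih t.length (hn ▸ hlt) t rfl ht
      refine ⟨p :: L, ?_, by simp [hflat, hsplit]⟩
      intro q hq
      rcases List.mem_cons.1 hq with rfl | hq
      · exact hp
      · exact hL q hq

/-- A prime Dyck prefix is the shortest nonempty Dyck prefix. -/
lemma prime_shortest (m : ℕ) (p t : List Bool) (hp : IsPrimePath m p) :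
    ∀ d' : List Bool, d' <+: p ++ t → IsDyck m d' → d' ≠ [] → p.length ≤ d'.length := by
  intro d' hd' hdyck hdne
  by_cases h : d'.length ≤ p.length
  · have hpre : d' <+: p :=
      List.prefix_of_prefix_length_le hd' (List.prefix_append p t) h
    by_cases heq : d' = p
    · rw [heq]
    · exact absurd hdyck.1 (hp.2.2 d' hpre hdne heq)
  · omega

/-- Moving a down step past a list of prime factors. -/
lemma ord_le_flatten (m : ℕ) (L : List (List Bool)) (hL : ∀ p ∈ L, IsPrimePath m p) :
    ∀ u v : List Bool,
      OrdLe m (u ++ false :: (L.flatten ++ v)) (u ++ (L.flatten ++ false :: v)) := by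
  induction L with
  | nil => intro u v; simp; exact Relation.ReflTransGen.refl
  | cons p L' ih =>
    intro u v
    have hp : IsPrimePath m p := hL p (by simp)
    have step : OrdCover m (u ++ false :: ((p :: L').flatten ++ v))
        ((u ++ p) ++ false :: (L'.flatten ++ v)) := by
      refine ⟨u, p, L'.flatten ++ v, hp.2.1, hp.1, ?_, ?_, ?_⟩
      · simp
      · simp
      · exact prime_shortest m p (L'.flatten ++ v) hp
    have rest := ih (fun q hq => hL q (by simp [hq])) (u ++ p) v
    refine Relation.ReflTransGen.head step ?_
    have : (u ++ p) ++ (L'.flatten ++ false :: v) = u ++ ((p :: L').flatten ++ false :: v) := by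
      simp
    rw [← this]
    exact rest

lemma greedyCover_ordLe (m : ℕ) {v w : List Bool} (h : GreedyCover m v w) :
    OrdLe m v w := by
  obtain ⟨u, d, t, hdne, hdyck, hv, hw, _⟩ := h
  obtain ⟨L, hL, hflat⟩ := exists_prime_factorization m d hdyck
  subst hv hw
  have := ord_le_flatten m L hL u t
  rw [hflat] at this
  simpa [List.append_assoc] using this

/-- A greedy cover relation between `m`-Dyck paths of the same size
implies comparability in the ordinary `m`-Tamari order; consequently the greedy order
is contained in the ordinary order (every greedy interval is an ordinary interval). -/
theorem greedyCover_implies_ordLe (m : ℕ) (hm : 1 ≤ m) :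
    (∀ v w : List Bool, IsDyck m v → IsDyck m w → v.count true = w.count true →
        GreedyCover m v w → OrdLe m v w) ∧
    (∀ v w : List Bool, IsDyck m v → IsDyck m w → v.count true = w.count true →
        GreedyLe m v w → OrdLe m v w) := by
  constructor
  · intro v w _ _ _ h
    exact greedyCover_ordLe m h
  · intro v w h1 h2 h3 h
    clear h1 h2 h3
    induction h with
    | refl => exact Relation.ReflTransGen.refl
    | tail _ hc ih => exact ih.trans (greedyCover_ordLe m hc)
end

section
/- The set D_m of nonempty m-Dyck paths, equipped with the product *, is a monoid with unit 1·0^m which is free on the set of generators D(w₁,…,w_{i−1},1·0^m,∅,…,∅), where 1 ≤ i ≤ m+1 and w₁,…,w_{i−1} range over all (possibly empty) m-Dyck paths: every element of D_m can be written in a unique way as a product of a finite sequence of these generators. -/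
/-! Every nonempty path is `u·1·0^k` with `k ≥ m` (its last peak), and then
`(u·1·0^k) * v = u·v·0^(k-m)`; the monoid laws follow at once.

The generator `D(w₁,…,w_{i−1}, 1·0^m, ∅,…,∅)` multiplies from the left as
`r ↦ D(w₁,…,w_{i−1}, r, ∅,…,∅)`. Conversely, a path `w ≠ 1·0^m` is of this form with `r ≠ ∅`
for exactly one choice of `w₁,…,w_{i−1}, r`: take for `r` the last nonempty component of the
decomposition `w = D(w₁,…,w_{m+1})`, which is unique because no Dyck path has a prefix `v·0`
with `v` a Dyck path. So `w = g * r` for a unique generator `g` and a unique nonempty path `r`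
of smaller size, and unique factorisation follows by induction. -/

namespace List

variable {α : Type*}

theorem prefix_append_iff {p a b : List α} :
    p <+: a ++ b ↔ p <+: a ∨ ∃ q, q <+: b ∧ p = a ++ q := by
  constructor
  · rintro ⟨r, hr⟩
    rcases append_eq_append_iff.mp hr with ⟨s, rfl, -⟩ | ⟨s, rfl, hb⟩
    · exact Or.inl (prefix_append p s)
    · exact Or.inr ⟨s, ⟨r, hb.symm⟩, rfl⟩
  · rintro (h | ⟨q, hq, rfl⟩)
    · exact h.trans (prefix_append a b)
    · exact (prefix_append_right_inj a).mpr hq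

theorem exists_eq_append_cons_replicate {l : List α} {a : α} (h : ∃ x ∈ l, x ≠ a) :
    ∃ pre b k, b ≠ a ∧ l = pre ++ b :: replicate k a := by
  induction l using reverseRecOn with
  | nil => simp at h
  | append_singleton l x ih =>
    by_cases hx : x = a
    · subst hx
      obtain ⟨pre, b, k, hb, rfl⟩ := ih (by simpa using h)
      exact ⟨pre, b, k + 1, hb, by simp [replicate_succ']⟩
    · exact ⟨l, x, 0, hx, by simp⟩

theorem eq_of_replicate_append_cons_eq {l l' : List α} {a b b' : α} {k k' : ℕ}
    (hb : b ≠ a) (hb' : b' ≠ a) (h : replicate k a ++ b :: l = replicate k' a ++ b' :: l') :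
    b = b' ∧ l = l' := by
  induction k generalizing k' with
  | zero => cases k' <;> simp_all [replicate_succ]
  | succ k ih => cases k' <;> simp_all [replicate_succ]

theorem eq_of_append_cons_replicate_eq {pre pre' : List α} {a b b' : α} {k k' : ℕ}
    (hb : b ≠ a) (hb' : b' ≠ a) (h : pre ++ b :: replicate k a = pre' ++ b' :: replicate k' a) :
    pre = pre' ∧ b = b' := by
  have := eq_of_replicate_append_cons_eq hb hb' (by simpa using congrArg reverse h)
  exact ⟨by simpa using this.2, this.1⟩

end List

section
open List

variable {m : ℕ}

theorem isDyck_nil (m : ℕ) : IsDyck m [] :=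
  ⟨by simp, fun p hp => by simp [prefix_nil.mp hp]⟩

theorem isDyck_true_cons_iff {X : List Bool} :
    IsDyck m (true :: X) ↔ X.count false = m * X.count true + m ∧
      ∀ p, p <+: X → p.count false ≤ m * p.count true + m := by
  have hcount : ∀ p : List Bool,
      (true :: p).count false = p.count false ∧ (true :: p).count true = p.count true + 1 :=
    fun p => ⟨count_cons_of_ne (by decide), count_cons_self⟩
  simp only [IsDyck, prefix_cons_iff, forall_eq_or_imp, forall_exists_index, and_imp, hcount]
  constructor
  · rintro ⟨hc, -, hp⟩
    refine ⟨by lia, fun p h => ?_⟩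
    have := hp _ p rfl h
    rw [(hcount p).1, (hcount p).2] at this
    lia
  · rintro ⟨hc, hp⟩
    refine ⟨by lia, by simp, ?_⟩
    rintro _ p rfl h
    rw [(hcount p).1, (hcount p).2]
    have := hp p h
    lia

theorem isDyck_peakWord (m : ℕ) : IsDyck m (peakWord m) := by
  refine isDyck_true_cons_iff.mpr ⟨by simp [count_replicate], fun p hp => ?_⟩
  obtain ⟨hlen, hp⟩ := prefix_replicate_iff.mp hp
  rw [hp]
  simp only [count_replicate_self, count_replicate]
  lia

theorem IsDyck.exists_eq_true_cons {w : List Bool} (hw : IsDyck m w) (hne : w ≠ []) :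
    ∃ X, w = true :: X := by
  obtain ⟨b, X, rfl⟩ := exists_cons_of_ne_nil hne
  cases b
  · simpa using hw.2 [false] (by simp)
  · exact ⟨X, rfl⟩

theorem IsDyck.exists_eq_append_peak {w : List Bool} (hw : IsDyck m w) (hne : w ≠ []) :
    ∃ u k, m ≤ k ∧ w = u ++ true :: replicate k false := by
  obtain ⟨X, hX⟩ := hw.exists_eq_true_cons hne
  obtain ⟨u, b, k, hb, rfl⟩ :=
    exists_eq_append_cons_replicate (l := w) (a := false) ⟨true, by simp [hX], by simp⟩
  obtain rfl : b = true := by simpa using hb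
  refine ⟨u, k, ?_, rfl⟩
  have hc := hw.1
  have hu := hw.2 u (prefix_append _ _)
  simp only [count_append, count_replicate_self, count_cons_self, count_cons_of_ne, ne_eq,
    Bool.true_eq_false, not_false_eq_true] at hc
  lia

theorem finalDescent_append_true_replicate (u : List Bool) (k : ℕ) :
    finalDescent (u ++ true :: replicate k false) = k := by
  simp [finalDescent, reverse_replicate]

theorem star_append_true_replicate (u v : List Bool) (k : ℕ) :
    star m (u ++ true :: replicate k false) v = u ++ v ++ replicate (k - m) false := by
  simp [_root_.star, finalDescent_append_true_replicate]

theorem star_ne_nil (w₁ : List Bool) {w₂ : List Bool} (h : w₂ ≠ []) : star m w₁ w₂ ≠ [] := by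
  simp [_root_.star, h]

theorem isDyck_star {w₁ w₂ : List Bool} (h₁ : IsDyck m w₁) (hne : w₁ ≠ []) (h₂ : IsDyck m w₂) :
    IsDyck m (star m w₁ w₂) := by
  obtain ⟨u, k, hk, rfl⟩ := h₁.exists_eq_append_peak hne
  have hc := h₁.1
  have hu := h₁.2 u (prefix_append _ _)
  simp only [count_append, count_cons, count_replicate] at hc
  rw [star_append_true_replicate]
  refine ⟨by simp [count_replicate, h₂.1]; lia, fun p hp => ?_⟩
  rcases prefix_append_iff.mp hp with hp | ⟨r, hr, rfl⟩
  · rcases prefix_append_iff.mp hp with hp | ⟨q, hq, rfl⟩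
    · exact h₁.2 p (hp.trans (prefix_append _ _))
    · have := h₂.2 q hq
      simp only [count_append]
      lia
  · obtain ⟨hr, hr'⟩ := prefix_replicate_iff.mp hr
    rw [hr']
    simp only [count_append, count_replicate_self, count_replicate, h₂.1]
    lia

theorem peakWord_star (w : List Bool) : star m (peakWord m) w = w := by
  simpa [peakWord] using star_append_true_replicate (m := m) [] w m

theorem IsDyck.star_peakWord {w : List Bool} (hw : IsDyck m w) (hne : w ≠ []) :
    star m w (peakWord m) = w := by
  obtain ⟨u, k, hk, rfl⟩ := hw.exists_eq_append_peak hne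
  rw [star_append_true_replicate]
  simp [peakWord, Nat.add_sub_cancel' hk]

theorem star_assoc {a b : List Bool} (ha : IsDyck m a) (hna : a ≠ []) (hb : IsDyck m b)
    (hnb : b ≠ []) (c : List Bool) : star m (star m a b) c = star m a (star m b c) := by
  obtain ⟨u, k, hk, rfl⟩ := ha.exists_eq_append_peak hna
  obtain ⟨u', k', hk', rfl⟩ := hb.exists_eq_append_peak hnb
  have : u ++ (u' ++ true :: replicate k' false) ++ replicate (k - m) false =
      (u ++ u') ++ true :: replicate (k' + (k - m)) false := by
    simp [replicate_add, -replicate_append_replicate]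
  rw [star_append_true_replicate, this]
  simp only [star_append_true_replicate]
  simp only [append_assoc, ← replicate_add]
  congr 4
  lia

def blocks (l : List (List Bool)) : List Bool := (l.map (· ++ [false])).flatten

@[simp] theorem blocks_nil : blocks [] = [] := rfl

@[simp] theorem blocks_cons (v : List Bool) (l : List (List Bool)) :
    blocks (v :: l) = v ++ false :: blocks l := by
  simp [blocks]

@[simp] theorem blocks_append (l l' : List (List Bool)) :
    blocks (l ++ l') = blocks l ++ blocks l' := by
  simp [blocks]

@[simp] theorem blocks_replicate_nil (k : ℕ) : blocks (replicate k []) = replicate k false := by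
  induction k with
  | zero => rfl
  | succ k ih => simp [replicate_succ, ih]

theorem count_false_blocks {l : List (List Bool)} (hl : ∀ v ∈ l, IsDyck m v) :
    (blocks l).count false = m * (blocks l).count true + l.length := by
  induction l with
  | nil => simp
  | cons v l ih =>
    have hv := (hl v mem_cons_self).1
    have := ih fun x hx => hl x (mem_cons_of_mem v hx)
    simp only [blocks_cons, count_append, length_cons, count_cons_self, count_cons_of_ne, ne_eq,
      Bool.false_eq_true, not_false_eq_true]
    lia

theorem count_false_le_of_prefix_blocks_append {l : List (List Bool)} {v p : List Bool}
    (hl : ∀ x ∈ l, IsDyck m x) (hv : IsDyck m v) (hp : p <+: blocks l ++ v) :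
    p.count false ≤ m * p.count true + l.length := by
  induction l generalizing p with
  | nil => simpa using hv.2 p hp
  | cons x l ih =>
    have hx := hl x mem_cons_self
    simp only [blocks_cons, append_assoc, cons_append] at hp
    rcases prefix_append_iff.mp hp with hp | ⟨q, hq, rfl⟩
    · have := hx.2 p hp
      simp only [length_cons]
      lia
    · rcases prefix_cons_iff.mp hq with rfl | ⟨t, rfl, ht⟩
      · simp [hx.1]
      · have := ih (fun y hy => hl y (mem_cons_of_mem x hy)) ht
        simp only [count_append, hx.1, length_cons, count_cons_self, count_cons_of_ne, ne_eq,
          Bool.false_eq_true, not_false_eq_true]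
        lia

theorem forall_prefix_le_or_exists_isDyck_append_false (X : List Bool) :
    (∀ p, p <+: X → p.count false ≤ m * p.count true) ∨
      ∃ v Y, IsDyck m v ∧ X = v ++ false :: Y := by
  induction X using reverseRecOn with
  | nil => exact Or.inl fun p hp => by simp [prefix_nil.mp hp]
  | append_singleton X b ih =>
    rcases ih with h | ⟨v, Y, hv, rfl⟩
    · by_cases hc : (X ++ [b]).count false ≤ m * (X ++ [b]).count true
      · refine Or.inl fun p hp => ?_
        rcases prefix_concat_iff.mp hp with rfl | hp
        exacts [hc, h p hp]
      · have hX := h X prefix_rfl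
        cases b
        · refine Or.inr ⟨X, [], ⟨?_, h⟩, rfl⟩
          simp only [count_append, count_singleton_self, count_singleton] at hc
          lia
        · simp only [count_append, count_singleton_self, count_singleton] at hc
          lia
    · exact Or.inr ⟨v, Y ++ [b], hv, by simp⟩

theorem exists_blocks_append_of_excess (c : ℕ) {X : List Bool}
    (hX : X.count false = m * X.count true + c)
    (hp : ∀ p, p <+: X → p.count false ≤ m * p.count true + c) :
    ∃ L v, L.length = c ∧ (∀ x ∈ L, IsDyck m x) ∧ IsDyck m v ∧ X = blocks L ++ v := by
  induction c generalizing X with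
  | zero => exact ⟨[], X, rfl, by simp, ⟨hX, hp⟩, rfl⟩
  | succ c ih =>
    rcases forall_prefix_le_or_exists_isDyck_append_false (m := m) X with h | ⟨v, Y, hv, rfl⟩
    · have := h X prefix_rfl
      lia
    · have hY : Y.count false = m * Y.count true + c := by
        simp only [count_append, hv.1, count_cons_self, count_cons_of_ne, ne_eq, Bool.false_eq_true,
          not_false_eq_true] at hX
        lia
      have hpY : ∀ p, p <+: Y → p.count false ≤ m * p.count true + c := fun p h' => by
        have := hp (v ++ false :: p) (by simpa using h')
        simp only [count_append, hv.1, count_cons_self, count_cons_of_ne, ne_eq, Bool.false_eq_true,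
          not_false_eq_true] at this
        lia
      obtain ⟨L, vl, rfl, hL, hvl, rfl⟩ := ih hY hpY
      refine ⟨v :: L, vl, rfl, ?_, hvl, by simp⟩
      exact forall_mem_cons.mpr ⟨hv, hL⟩

/-- Appending a `0` to `D(w₁,…,w_{m+1}) = 1 (w₁0) ⋯ (w_m0) w_{m+1}` makes all `m+1`
components uniform blocks `wⱼ0`. -/
theorem isDyck_and_ne_nil_iff_exists_blocks {w : List Bool} :
    IsDyck m w ∧ w ≠ [] ↔ ∃ l : List (List Bool), l.length = m + 1 ∧ (∀ v ∈ l, IsDyck m v) ∧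
      w ++ [false] = true :: blocks l := by
  constructor
  · rintro ⟨hw, hne⟩
    obtain ⟨X, rfl⟩ := hw.exists_eq_true_cons hne
    obtain ⟨hX, hp⟩ := isDyck_true_cons_iff.mp hw
    obtain ⟨L, v, hL, hLd, hv, rfl⟩ := exists_blocks_append_of_excess m hX hp
    refine ⟨L ++ [v], by simp [hL], ?_, by simp⟩
    exact forall_mem_append.mpr ⟨hLd, forall_mem_singleton.mpr hv⟩
  · rintro ⟨l, hl, hld, hw⟩
    obtain ⟨L, v, rfl⟩ := (eq_nil_or_concat' l).resolve_left (by rintro rfl; simp at hl)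
    simp only [forall_mem_append, forall_mem_singleton, length_append, length_singleton,
      Nat.add_right_cancel_iff] at hl hld
    obtain ⟨hLd, hv⟩ := hld
    have hw' : w = true :: (blocks L ++ v) :=
      append_cancel_right (by simpa using hw)
    subst hw'
    refine ⟨isDyck_true_cons_iff.mpr ⟨?_, fun p hp => ?_⟩, by simp⟩
    · simp only [count_append, count_false_blocks hLd, hl, hv.1]
      lia
    · simpa [hl] using count_false_le_of_prefix_blocks_append hLd hv hp

theorem IsDyck.not_append_false_prefix {d v : List Bool} (hd : IsDyck m d) (hv : IsDyck m v) :
    ¬ v ++ [false] <+: d := fun h => by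
  simpa [hv.1] using hd.2 _ h

theorem IsDyck.eq_of_append_false_cons_eq {v v' Z Z' : List Bool} (hv : IsDyck m v)
    (hv' : IsDyck m v') (h : v ++ false :: Z = v' ++ false :: Z') : v = v' ∧ Z = Z' := by
  wlog hle : v.length ≤ v'.length generalizing v v' Z Z'
  · obtain ⟨h₁, h₂⟩ := this hv' hv h.symm (by lia)
    exact ⟨h₁.symm, h₂.symm⟩
  rcases hle.lt_or_eq with hlt | heq
  · have hpre : v ++ [false] <+: v' ++ false :: Z' := h ▸ ⟨Z, by simp⟩
    exact absurd (prefix_of_prefix_length_le hpre (prefix_append v' _) (by simpa using hlt))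
      (hv'.not_append_false_prefix hv)
  · simpa using append_inj h heq

theorem eq_of_blocks_eq {l l' : List (List Bool)} (hl : ∀ v ∈ l, IsDyck m v)
    (hl' : ∀ v ∈ l', IsDyck m v) (h : blocks l = blocks l') : l = l' := by
  induction l generalizing l' with
  | nil => cases l' <;> simp_all
  | cons v l ih =>
    cases l' with
    | nil => simp at h
    | cons v' l' =>
      obtain ⟨rfl, htail⟩ :=
        (hl v mem_cons_self).eq_of_append_false_cons_eq (hl' v' mem_cons_self) (by simpa using h)
      rw [ih (fun x hx => hl x (mem_cons_of_mem v hx)) (fun x hx => hl' x (mem_cons_of_mem v hx))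
        htail]

theorem isDyck_of_mem_append_cons_replicate_nil {pre : List (List Bool)} {r : List Bool}
    {k : ℕ} (hd : ∀ v ∈ pre, IsDyck m v) (hr : IsDyck m r) :
    ∀ v ∈ pre ++ r :: replicate k [], IsDyck m v := by
  simp only [forall_mem_append, forall_mem_cons, mem_replicate]
  exact ⟨hd, hr, fun v hv => hv.2 ▸ isDyck_nil m⟩

/-- The path `D(pre₁, …, preᵢ, r, ∅, …, ∅)` with `i = pre.length ≤ m`. -/
def plug (m : ℕ) (pre : List (List Bool)) (r : List Bool) : List Bool :=
  true :: (blocks pre ++ r ++ replicate (m - pre.length) false)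

theorem plug_append_false (pre : List (List Bool)) (r : List Bool) :
    plug m pre r ++ [false] = true :: blocks (pre ++ r :: replicate (m - pre.length) []) := by
  simp only [plug, append_assoc, cons_append, blocks_append, blocks_cons, blocks_replicate_nil]
  rw [← replicate_succ', replicate_succ]

theorem isDyck_plug {pre : List (List Bool)} {r : List Bool} (hpre : pre.length ≤ m)
    (hd : ∀ v ∈ pre, IsDyck m v) (hr : IsDyck m r) : IsDyck m (plug m pre r) := by
  refine (isDyck_and_ne_nil_iff_exists_blocks.mpr ⟨_, ?_, ?_, plug_append_false pre r⟩).1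
  · simp only [length_append, length_cons, length_replicate]
    lia
  · exact isDyck_of_mem_append_cons_replicate_nil hd hr

theorem eq_of_plug_eq {pre pre' : List (List Bool)} {r r' : List Bool} (hd : ∀ v ∈ pre, IsDyck m v)
    (hd' : ∀ v ∈ pre', IsDyck m v) (hr : IsDyck m r) (hr' : IsDyck m r') (hne : r ≠ [])
    (hne' : r' ≠ []) (h : plug m pre r = plug m pre' r') : pre = pre' ∧ r = r' := by
  have := congrArg (· ++ [false]) h
  simp only [plug_append_false, cons.injEq, true_and] at this
  exact eq_of_append_cons_replicate_eq hne hne' (eq_of_blocks_eq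
    (isDyck_of_mem_append_cons_replicate_nil hd hr)
    (isDyck_of_mem_append_cons_replicate_nil hd' hr') this)

theorem star_plug_peakWord (pre : List (List Bool)) (r : List Bool) :
    star m (plug m pre (peakWord m)) r = plug m pre r := by
  have : plug m pre (peakWord m) =
      (true :: blocks pre) ++ true :: replicate (m + (m - pre.length)) false := by
    simp [plug, peakWord]
  rw [this, star_append_true_replicate]
  simp [plug]

theorem IsDyck.exists_eq_plug {w : List Bool} (hw : IsDyck m w) (hne : w ≠ [])
    (hpk : w ≠ peakWord m) : ∃ pre r, pre.length ≤ m ∧ (∀ v ∈ pre, IsDyck m v) ∧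
      IsDyck m r ∧ r ≠ [] ∧ w = plug m pre r := by
  obtain ⟨l, hl, hld, hw'⟩ := isDyck_and_ne_nil_iff_exists_blocks.mp ⟨hw, hne⟩
  by_cases hall : ∀ x ∈ l, x = []
  · refine absurd (append_cancel_right (bs := [false]) ?_) hpk
    rw [hw', eq_replicate_iff.mpr ⟨hl, hall⟩]
    simp [peakWord, replicate_succ']
  push Not at hall
  obtain ⟨pre, r, k, hr, rfl⟩ := exists_eq_append_cons_replicate hall
  simp only [length_append, length_cons, length_replicate] at hl
  obtain rfl : k = m - pre.length := by lia
  simp only [forall_mem_append, forall_mem_cons] at hld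
  refine ⟨pre, r, by lia, hld.1, hld.2.1, hr, append_cancel_right (bs := [false]) ?_⟩
  rw [hw', plug_append_false]

theorem Dpath_append_false (ws : Fin (m + 1) → List Bool) :
    Dpath m ws ++ [false] = true :: blocks (ofFn ws) := by
  rw [Dpath, blocks, ofFn_succ']
  simp [map_ofFn, Function.comp_def]

theorem isGenerator_iff {g : List Bool} : IsGenerator m g ↔
    ∃ pre : List (List Bool), pre.length ≤ m ∧ (∀ v ∈ pre, IsDyck m v) ∧
      g = plug m pre (peakWord m) := by
  constructor
  · rintro ⟨i, ws, hws, hi, hgt, rfl⟩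
    refine ⟨(ofFn ws).take i, by simp only [length_take, length_ofFn]; lia, fun v hv => ?_,
      append_cancel_right (bs := [false]) ?_⟩
    · obtain ⟨j, rfl⟩ := mem_ofFn.mp (mem_of_mem_take hv)
      exact hws j
    have hl : ofFn ws = (ofFn ws).take i ++ peakWord m :: replicate (m - i) [] := by
      refine ext_getElem ?_ fun k hk _ => ?_
      · simp only [length_ofFn, length_append, length_take, length_cons, length_replicate]
        lia
      simp only [length_ofFn] at hk
      rw [List.getElem_ofFn]
      rcases lt_trichotomy k i with h | rfl | h
      · simp [getElem_append_left, h, -ofFn_succ]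
      · simp [getElem_append_right, hi]
      · have : (⟨k, hk⟩ : Fin (m + 1)) > i := h
        simp [getElem_append_right, h.le, hgt _ this, getElem_cons, Nat.sub_ne_zero_of_lt h]
    have hlen : ((ofFn ws).take i).length = i := by simp
    rw [Dpath_append_false, plug_append_false, hlen, ← hl]
  · rintro ⟨pre, hpre, hd, rfl⟩
    set l := pre ++ peakWord m :: replicate (m - pre.length) []
    have hl : l.length = m + 1 := by
      simp only [l, length_append, length_cons, length_replicate]
      lia
    have hld := isDyck_of_mem_append_cons_replicate_nil (k := m - pre.length) hd (isDyck_peakWord m)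
    refine ⟨⟨pre.length, by lia⟩, fun j => l[j.1], fun j => hld _ (getElem_mem _), by simp [l],
      fun j hj => ?_, append_cancel_right (bs := [false]) ?_⟩
    · have hj' : pre.length < j := hj
      simp [l, getElem_append_right, hj'.le, getElem_cons, Nat.sub_ne_zero_of_lt hj']
    · rw [Dpath_append_false, plug_append_false]
      congr 2
      exact ext_getElem (by rw [length_ofFn]; exact hl) fun k _ _ => by simp [l, -ofFn_succ]

theorem IsGenerator.isDyck {g : List Bool} (hg : IsGenerator m g) : IsDyck m g := by
  obtain ⟨pre, hpre, hd, rfl⟩ := isGenerator_iff.mp hg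
  exact isDyck_plug hpre hd (isDyck_peakWord m)

theorem IsGenerator.ne_nil {g : List Bool} (hg : IsGenerator m g) : g ≠ [] := by
  obtain ⟨_, _, _, _, _, rfl⟩ := hg
  simp [Dpath]

theorem isDyck_foldr_star {L : List (List Bool)} (hL : ∀ g ∈ L, IsGenerator m g) :
    IsDyck m (L.foldr (star m) (peakWord m)) ∧ L.foldr (star m) (peakWord m) ≠ [] := by
  induction L with
  | nil => exact ⟨isDyck_peakWord m, by simp [peakWord]⟩
  | cons g L ih =>
    obtain ⟨hg, hL⟩ := forall_mem_cons.mp hL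
    obtain ⟨h, hne⟩ := ih hL
    exact ⟨isDyck_star hg.isDyck hg.ne_nil h, star_ne_nil g hne⟩

theorem exists_foldr_star_eq {w : List Bool} (hw : IsDyck m w) (hne : w ≠ []) :
    ∃ L : List (List Bool), (∀ g ∈ L, IsGenerator m g) ∧ L.foldr (star m) (peakWord m) = w := by
  induction hn : w.count true using Nat.strong_induction_on generalizing w with
  | _ n ih =>
  by_cases hpk : w = peakWord m
  · exact ⟨[], by simp, hpk.symm⟩
  obtain ⟨pre, r, hpre, hd, hr, hrne, rfl⟩ := hw.exists_eq_plug hne hpk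
  obtain ⟨L, hL, hLr⟩ := ih (r.count true) (by rw [← hn, plug, count_cons_self, count_append, count_append]; lia) hr hrne rfl
  refine ⟨plug m pre (peakWord m) :: L, ?_, by simp [hLr, star_plug_peakWord]⟩
  exact forall_mem_cons.mpr ⟨isGenerator_iff.mpr ⟨pre, hpre, hd, rfl⟩, hL⟩

theorem foldr_star_cons_ne_peakWord {g : List Bool} {L : List (List Bool)}
    (hL : ∀ x ∈ g :: L, IsGenerator m x) : (g :: L).foldr (star m) (peakWord m) ≠ peakWord m := by
  obtain ⟨hg, hT⟩ := forall_mem_cons.mp hL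
  obtain ⟨pre, -, -, rfl⟩ := isGenerator_iff.mp hg
  obtain ⟨hr, hne⟩ := isDyck_foldr_star hT
  obtain ⟨X, hX⟩ := hr.exists_eq_true_cons hne
  rw [foldr_cons, star_plug_peakWord, hX]
  intro h
  simpa [plug, peakWord, count_replicate] using congrArg (count true) h

theorem eq_of_foldr_star_eq {L₁ L₂ : List (List Bool)} (h₁ : ∀ g ∈ L₁, IsGenerator m g)
    (h₂ : ∀ g ∈ L₂, IsGenerator m g)
    (h : L₁.foldr (star m) (peakWord m) = L₂.foldr (star m) (peakWord m)) : L₁ = L₂ := by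
  induction L₁ generalizing L₂ with
  | nil =>
    cases L₂ with
    | nil => rfl
    | cons g L => exact absurd h.symm (foldr_star_cons_ne_peakWord h₂)
  | cons g L ih =>
    cases L₂ with
    | nil => exact absurd h (foldr_star_cons_ne_peakWord h₁)
    | cons g' L' =>
      obtain ⟨hg, hL⟩ := forall_mem_cons.mp h₁
      obtain ⟨hg', hL'⟩ := forall_mem_cons.mp h₂
      obtain ⟨pre, -, hd, rfl⟩ := isGenerator_iff.mp hg
      obtain ⟨pre', -, hd', rfl⟩ := isGenerator_iff.mp hg'
      obtain ⟨hr, hne⟩ := isDyck_foldr_star hL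
      obtain ⟨hr', hne'⟩ := isDyck_foldr_star hL'
      simp only [foldr_cons, star_plug_peakWord] at h
      obtain ⟨rfl, htail⟩ := eq_of_plug_eq hd hd' hr hr' hne hne' h
      rw [ih hL hL' htail]

end

theorem dyck_star_free_monoid_general (m : ℕ) :
    -- closure
    (∀ w₁ w₂ : List Bool, IsDyck m w₁ → w₁ ≠ [] → IsDyck m w₂ → w₂ ≠ [] →
        IsDyck m (star m w₁ w₂) ∧ star m w₁ w₂ ≠ []) ∧
    -- unit laws
    (∀ w : List Bool, IsDyck m w → w ≠ [] →
        star m (peakWord m) w = w ∧ star m w (peakWord m) = w) ∧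
    -- associativity
    (∀ a b c : List Bool, IsDyck m a → a ≠ [] → IsDyck m b → b ≠ [] →
        IsDyck m c → c ≠ [] → star m (star m a b) c = star m a (star m b c)) ∧
    -- the generators are nonempty `m`-Dyck words
    (∀ g : List Bool, IsGenerator m g → IsDyck m g ∧ g ≠ []) ∧
    -- unique factorisation into generators
    (∀ w : List Bool, IsDyck m w → w ≠ [] →
        ∃! L : List (List Bool),
          (∀ g ∈ L, IsGenerator m g) ∧ L.foldr (star m) (peakWord m) = w) := by
  refine ⟨fun w₁ w₂ h₁ hne₁ h₂ hne₂ => ⟨isDyck_star h₁ hne₁ h₂, star_ne_nil w₁ hne₂⟩,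
    fun w hw hne => ⟨peakWord_star w, hw.star_peakWord hne⟩,
    fun a b c ha hna hb hnb _ _ => star_assoc ha hna hb hnb c,
    fun g hg => ⟨hg.isDyck, hg.ne_nil⟩, fun w hw hne => ?_⟩
  obtain ⟨L, hL, hLw⟩ := exists_foldr_star_eq hw hne
  exact ⟨L, ⟨hL, hLw⟩, fun L' hL' => eq_of_foldr_star_eq hL'.1 hL (hL'.2.trans hLw.symm)⟩

/-- The set `D_m` of nonempty `m`-Dyck words, equipped with the
product `*`, is a monoid with unit `1·0^m`, free on the generators
`D(w₁,…,w_{i−1}, 1·0^m, ∅,…,∅)`: every element has a unique factorisation as a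
product of generators. -/
theorem dyck_star_free_monoid (m : ℕ) (hm : 1 ≤ m) :
    -- closure
    (∀ w₁ w₂ : List Bool, IsDyck m w₁ → w₁ ≠ [] → IsDyck m w₂ → w₂ ≠ [] →
        IsDyck m (star m w₁ w₂) ∧ star m w₁ w₂ ≠ []) ∧
    -- unit laws
    (∀ w : List Bool, IsDyck m w → w ≠ [] →
        star m (peakWord m) w = w ∧ star m w (peakWord m) = w) ∧
    -- associativity
    (∀ a b c : List Bool, IsDyck m a → a ≠ [] → IsDyck m b → b ≠ [] →
        IsDyck m c → c ≠ [] → star m (star m a b) c = star m a (star m b c)) ∧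
    -- the generators are nonempty `m`-Dyck words
    (∀ g : List Bool, IsGenerator m g → IsDyck m g ∧ g ≠ []) ∧
    -- unique factorisation into generators
    (∀ w : List Bool, IsDyck m w → w ≠ [] →
        ∃! L : List (List Bool),
          (∀ g ∈ L, IsGenerator m g) ∧ L.foldr (star m) (peakWord m) = w) :=
  dyck_star_free_monoid_general m
end

section
/- The set of greedy m-Tamari intervals [v,w] of positive size, equipped with the product [v₁,w₁] * [v₂,w₂] := [v₁*v₂, w₁*w₂] (which is well defined: v₁ ≤ w₁ and v₂ ≤ w₂ imply v₁*v₂ ≤ w₁*w₂ in the greedy order), is a monoid with unit [1·0^m, 1·0^m] which is free on the set of generators [v,w] where v is a generator of the free monoid (D_m,*) (i.e., v = D(v₁,…,v_{i−1},1·0^m,∅,…,∅) for some 1 ≤ i ≤ m+1 and possibly empty m-Dyck paths v₁,…,v_{i−1}) and w is any m-Dyck path with v ≤ w: every interval of positive size can be written in a unique way as a product of a finite sequence of these generators. -/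
/-- A greedy `m`-Tamari interval `[v, w]`: a pair of `m`-Dyck words of the same size
with `v ≤ w` in the greedy order. -/
def IsInterval (m : ℕ) (p : List Bool × List Bool) : Prop :=
  IsDyck m p.1 ∧ IsDyck m p.2 ∧ p.1.count true = p.2.count true ∧ GreedyLe m p.1 p.2

/-- Componentwise product of intervals: `[v₁,w₁] * [v₂,w₂] = [v₁*v₂, w₁*w₂]`. -/
def istar (m : ℕ) (p q : List Bool × List Bool) : List Bool × List Bool :=
  (star m p.1 q.1, star m p.2 q.2)

/-- Generator intervals `[v,w]`: `v` a generator of the free monoid `(D_m,*)` and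
`w` any `m`-Dyck word with `v ≤ w` (of the same size). -/
def IsGenInterval (m : ℕ) (p : List Bool × List Bool) : Prop :=
  IsGenerator m p.1 ∧ IsInterval m p

namespace DyckAux

open List

variable {m : ℕ}

theorem cnt_len (w : List Bool) : w.count true + w.count false = w.length := by
  induction w with
  | nil => simp
  | cons b t ih => cases b <;> simp [List.count_cons] <;> omega

theorem prefix_cases {p A B : List Bool} (h : p <+: A ++ B) :
    p <+: A ∨ ∃ q, q <+: B ∧ p = A ++ q := by
  rcases le_or_gt p.length A.length with hl | hl
  · left
    exact List.prefix_of_prefix_length_le h (List.prefix_append A B) hl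
  · right
    refine ⟨B.take (p.length - A.length), List.take_prefix _ _, ?_⟩
    have h1 : p = (A ++ B).take p.length := List.prefix_iff_eq_take.mp h
    nth_rewrite 1 [h1]
    rw [List.take_append, List.take_of_length_le (by omega)]

theorem dyck_nil : IsDyck m [] := by
  constructor
  · simp
  · intro p hp
    simp [List.prefix_nil.mp hp]

theorem dpref {w p : List Bool} (hw : IsDyck m w) (hp : p <+: w) :
    p.count false ≤ m * p.count true := hw.2 p hp

theorem count_true_pos {w : List Bool} (hw : IsDyck m w) (hne : w ≠ []) :
    0 < w.count true := by
  by_contra h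
  push_neg at h
  have h1 : w.count true = 0 := by omega
  have h2 : w.count false = 0 := by have h := hw.1; rw [h1] at h; simpa using h
  have h3 := cnt_len w
  rw [h1, h2] at h3
  exact hne (List.eq_nil_of_length_eq_zero h3.symm)

theorem head_true {w : List Bool} (hw : IsDyck m w) (hne : w ≠ []) :
    ∃ t, w = true :: t := by
  cases w with
  | nil => exact absurd rfl hne
  | cons b t =>
    cases b
    · exfalso
      have := dpref hw (p := [false]) ⟨t, rfl⟩
      simp at this
    · exact ⟨t, rfl⟩

theorem dropWhile_head_false {l : List Bool} {p : Bool → Bool} {b : Bool} {rest : List Bool}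
    (h : l.dropWhile p = b :: rest) : p b = false := by
  have h2 := List.head_dropWhile_not p (l := l) (by simp [h])
  have h3 : (List.dropWhile p l).head (by simp [h]) = b := by simp [h]
  rw [h3] at h2
  exact h2

theorem takeWhile_rep_false (t : ℕ) (l : List Bool) :
    (List.replicate t false ++ true :: l).takeWhile (fun b => !b) = List.replicate t false := by
  induction t with
  | zero => simp
  | succ n ih => simp [List.replicate_succ, List.takeWhile_cons, ih]

theorem fd_eq (R : List Bool) (t : ℕ) :
    finalDescent (R ++ true :: List.replicate t false) = t := by
  unfold finalDescent
  rw [List.reverse_append]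
  simp only [List.reverse_cons]
  rw [List.append_assoc, List.reverse_replicate]
  have : List.replicate t false ++ ([true] ++ R.reverse) =
      List.replicate t false ++ true :: R.reverse := by simp
  rw [this, takeWhile_rep_false]
  simp

/-- Structure of a nonempty Dyck word. -/
theorem dstructure {w : List Bool} (hw : IsDyck m w) (hne : w ≠ []) :
    ∃ R t, w = R ++ true :: List.replicate t false ∧ finalDescent w = t ∧ m ≤ t := by
  have htrue : true ∈ w.reverse := by
    rw [List.mem_reverse]
    exact List.count_pos_iff.mp (count_true_pos hw hne)
  have hsplit := List.takeWhile_append_dropWhile (p := fun b => !b) (l := w.reverse)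
  set tW := w.reverse.takeWhile (fun b => !b) with htW
  set dW := w.reverse.dropWhile (fun b => !b) with hdW
  have hdW_ne : dW ≠ [] := by
    intro h
    rw [h, List.append_nil] at hsplit
    have h2 : ∀ b ∈ w.reverse, b = false := by
      intro b hb
      rw [← hsplit] at hb
      have := List.mem_takeWhile_imp hb
      simpa using this
    have := h2 true htrue
    simp at this
  obtain ⟨b, rest, hbr⟩ := List.exists_cons_of_ne_nil hdW_ne
  have hbtrue : b = true := by
    have h2 : w.reverse.dropWhile (fun b => !b) = b :: rest := by rw [← hdW]; exact hbr
    have := dropWhile_head_false h2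
    simpa using this
  have htWrep : tW = List.replicate tW.length false := by
    apply List.eq_replicate_of_mem
    intro c hc
    have := List.mem_takeWhile_imp hc
    simpa using this
  have hw' : w = rest.reverse ++ true :: List.replicate tW.length false := by
    have h4 : w.reverse = tW ++ true :: rest := by rw [← hsplit, hbr, hbtrue]
    have h5 : w = (tW ++ true :: rest).reverse := by rw [← h4, List.reverse_reverse]
    rw [h5, List.reverse_append, List.reverse_cons]
    rw [htWrep, List.reverse_replicate]
    simp
  refine ⟨rest.reverse, tW.length, hw', rfl, ?_⟩
  have hpre : rest.reverse <+: w := by rw [hw']; exact ⟨_, rfl⟩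
  have h1 := dpref hw hpre
  have h2 := hw.1
  rw [hw'] at h2
  simp [List.count_append, List.count_cons, List.count_replicate, List.count_reverse,
    Nat.mul_add, Nat.mul_one] at h1 h2
  omega

end DyckAux

namespace DyckAux

open List

variable {m : ℕ}

theorem star_eq {w : List Bool} {t : ℕ} (R x : List Bool)
    (hw : w = R ++ true :: List.replicate t false) :
    _root_.star m w x = R ++ x ++ List.replicate (t - m) false := by
  subst hw
  unfold _root_.star
  rw [fd_eq]
  have hlen : (R ++ true :: List.replicate t false).length = R.length + (t + 1) := by simp
  rw [hlen]
  have h2 : R.length + (t + 1) - (t + 1) = R.length := by omega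
  rw [h2, List.append_assoc]
  rw [List.take_left' rfl]
  rw [List.append_assoc]

theorem prefix_replicate {r : List Bool} {n : ℕ} {b : Bool} (h : r <+: List.replicate n b) :
    r = List.replicate r.length b ∧ r.length ≤ n := by
  constructor
  · apply List.eq_replicate_of_mem
    intro c hc
    have := h.subset hc
    exact List.eq_of_mem_replicate this
  · have := h.length_le
    simpa using this

/-- Counts of a star product. -/
theorem star_count {a x : List Bool} {R : List Bool} {t : ℕ}
    (hstr : a = R ++ true :: List.replicate t false) (hmt : m ≤ t) :
    (_root_.star m a x).count true = a.count true + x.count true - 1 ∧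
    (_root_.star m a x).count false = a.count false + x.count false - m ∧
    1 ≤ a.count true := by
  rw [star_eq R x hstr, hstr]
  simp [List.count_append, List.count_cons, List.count_replicate]
  omega

theorem star_dyck {a x : List Bool} (ha : IsDyck m a) (hane : a ≠ []) (hx : IsDyck m x) :
    IsDyck m (_root_.star m a x) := by
  obtain ⟨R, t, hstr, hfd, hmt⟩ := dstructure ha hane
  rw [star_eq R x hstr]
  have hRpre : R <+: a := by rw [hstr]; exact ⟨_, rfl⟩
  have hR := dpref ha hRpre
  have hbal := ha.1
  rw [hstr] at hbal
  simp [List.count_append, List.count_cons, List.count_replicate, Nat.mul_add, Nat.mul_one] at hbal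
  have h1 := hx.1
  constructor
  · simp [List.count_append, List.count_replicate, Nat.mul_add]
    omega
  · intro p hp
    rw [List.append_assoc] at hp
    rcases prefix_cases hp with hpR | ⟨q, hq, rfl⟩
    · exact le_trans (dpref ha (hpR.trans hRpre)) (by rfl)
    · rcases prefix_cases hq with hqx | ⟨r, hr, rfl⟩
      · have h1 := dpref hx hqx
        simp [List.count_append, Nat.mul_add]
        omega
      
      · obtain ⟨hrrep, hrlen⟩ := prefix_replicate hr
        have h1 := hx.1
        rw [hrrep]
        simp [List.count_append, List.count_replicate, Nat.mul_add]
        omega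

theorem star_ne {a x : List Bool} (hx : x ≠ []) : _root_.star m a x ≠ [] := by
  intro h
  apply hx
  have h2 : x <:+: _root_.star m a x := ⟨_, _, rfl⟩
  rw [h] at h2
  simpa using h2

theorem peak_dyck : IsDyck m (peakWord m) := by
  constructor
  · simp [peakWord, List.count_cons, List.count_replicate]
  · intro p hp
    unfold peakWord at hp
    rcases List.prefix_cons_iff.mp hp with h | ⟨q, rfl, hq⟩
    · simp [h]
    · obtain ⟨hrep, hlen⟩ := prefix_replicate hq
      rw [hrep]
      simp [List.count_cons, List.count_replicate]
      omega

theorem peak_ne : peakWord m ≠ [] := by simp [peakWord]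

theorem peak_count_true : (peakWord m).count true = 1 := by
  simp [peakWord, List.count_cons, List.count_replicate]

theorem peak_structure : peakWord m = [] ++ true :: List.replicate m false := by
  simp [peakWord]

theorem star_peak_left (x : List Bool) : _root_.star m (peakWord m) x = x := by
  rw [star_eq [] x peak_structure]
  simp

theorem star_peak_right {a : List Bool} (ha : IsDyck m a) (hane : a ≠ []) :
    star m a (peakWord m) = a := by
  obtain ⟨R, t, hstr, hfd, hmt⟩ := dstructure ha hane
  rw [star_eq R _ hstr, hstr]
  unfold peakWord
  have h3 : List.replicate t false = List.replicate m false ++ List.replicate (t - m) false := by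
    rw [← List.replicate_add]
    congr 1
    omega
  rw [h3]
  simp [List.append_assoc]

/-- star of two structured words is structured. -/
theorem star_structure {a b : List Bool} {Ra Rb : List Bool} {ta tb : ℕ}
    (hsa : a = Ra ++ true :: List.replicate ta false)
    (hsb : b = Rb ++ true :: List.replicate tb false) (hmta : m ≤ ta) :
    star m a b = (Ra ++ Rb) ++ true :: List.replicate (tb + (ta - m)) false := by
  rw [star_eq Ra b hsa, hsb]
  simp only [List.append_assoc, List.cons_append]
  congr 2
  rw [← List.replicate_add]

theorem star_assoc {a b : List Bool} (ha : IsDyck m a) (hane : a ≠ [])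
    (hb : IsDyck m b) (hbne : b ≠ []) (c : List Bool) :
    _root_.star m (_root_.star m a b) c = star m a (_root_.star m b c) := by
  obtain ⟨Ra, ta, hsa, _, hmta⟩ := dstructure ha hane
  obtain ⟨Rb, tb, hsb, _, hmtb⟩ := dstructure hb hbne
  rw [star_eq _ c (star_structure hsa hsb hmta)]
  rw [star_eq Rb c hsb, star_eq Ra _ hsa]
  have h3 : tb + (ta - m) - m = (tb - m) + (ta - m) := by omega
  rw [h3, List.replicate_add]
  simp [List.append_assoc]

end DyckAux

namespace DyckAux

open List

variable {m : ℕ}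

theorem split_last_true {w : List Bool} (htrue' : true ∈ w) :
    ∃ R t, w = R ++ true :: List.replicate t false ∧ finalDescent w = t := by
  have htrue : true ∈ w.reverse := by rwa [List.mem_reverse]
  have hsplit := List.takeWhile_append_dropWhile (p := fun b => !b) (l := w.reverse)
  set tW := w.reverse.takeWhile (fun b => !b) with htW
  set dW := w.reverse.dropWhile (fun b => !b) with hdW
  have hdW_ne : dW ≠ [] := by
    intro h
    rw [h, List.append_nil] at hsplit
    have h2 : ∀ b ∈ w.reverse, b = false := by
      intro b hb
      rw [← hsplit] at hb
      have := List.mem_takeWhile_imp hb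
      simpa using this
    have := h2 true htrue
    simp at this
  obtain ⟨b, rest, hbr⟩ := List.exists_cons_of_ne_nil hdW_ne
  have hbtrue : b = true := by
    have h2 : w.reverse.dropWhile (fun b => !b) = b :: rest := by rw [← hdW]; exact hbr
    have := dropWhile_head_false h2
    simpa using this
  have htWrep : tW = List.replicate tW.length false := by
    apply List.eq_replicate_of_mem
    intro c hc
    have := List.mem_takeWhile_imp hc
    simpa using this
  have hw' : w = rest.reverse ++ true :: List.replicate tW.length false := by
    have h4 : w.reverse = tW ++ true :: rest := by rw [← hsplit, hbr, hbtrue]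
    have h5 : w = (tW ++ true :: rest).reverse := by rw [← h4, List.reverse_reverse]
    rw [h5, List.reverse_append, List.reverse_cons]
    rw [htWrep, List.reverse_replicate]
    simp
  exact ⟨rest.reverse, tW.length, hw', rfl⟩

theorem ne_nil_of_count {w : List Bool} (h : 0 < w.count true) : w ≠ [] := by
  intro he
  rw [he] at h
  simp at h

/-- helper: prefixes through the moved `false`. -/
theorem pref_mid {u q w : List Bool} {rest : List Bool}
    (hw : w = u ++ false :: rest) (hq : q <+: rest) :
    u ++ false :: q <+: w := by
  obtain ⟨r, hr⟩ := hq
  exact ⟨r, by rw [hw, ← hr]; simp⟩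

theorem cover_counts {w w' : List Bool} (h : GreedyCover m w w') :
    w.count true = w'.count true ∧ w.count false = w'.count false := by
  obtain ⟨u, d, v, hdne, hd, hw, hw', hlong⟩ := h
  subst hw hw'
  constructor <;> simp [List.count_append, List.count_cons] <;> omega

theorem cover_dyck {w w' : List Bool} (hw : IsDyck m w) (h : GreedyCover m w w') :
    IsDyck m w' := by
  obtain ⟨u, d, v, hdne, hd, hweq, hw', hlong⟩ := h
  subst hw'
  constructor
  · have h1 := hw.1
    rw [hweq] at h1
    simp [List.count_append, List.count_cons] at h1 ⊢
    omega
  · intro p hp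
    rcases prefix_cases hp with hpud | ⟨r, hr, rfl⟩
    · rcases prefix_cases hpud with hpu | ⟨q, hq, rfl⟩
      · exact dpref hw (hpu.trans (by rw [hweq]; exact ⟨_, rfl⟩))
      · have h2 : u ++ false :: q <+: w :=
          pref_mid hweq (hq.trans ⟨v, rfl⟩)
        have h3 := dpref hw h2
        simp [List.count_append, List.count_cons, Nat.mul_add] at h3 ⊢
        omega
    · rcases (List.prefix_cons_iff.mp hr) with h0 | ⟨s, rfl, hs⟩
      · subst h0
        have h2 : u ++ false :: d <+: w := pref_mid hweq ⟨v, rfl⟩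
        have h3 := dpref hw h2
        simp [List.count_append, List.count_cons, Nat.mul_add] at h3 ⊢
        omega
      · have h2 : u ++ false :: (d ++ s) <+: w := by
          apply pref_mid hweq
          obtain ⟨r2, hr2⟩ := hs
          exact ⟨r2, by rw [List.append_assoc, hr2]⟩
        have h3 := dpref hw h2
        simp [List.count_append, List.count_cons, Nat.mul_add] at h3 ⊢
        omega

theorem le_dyck {w w' : List Bool} (hw : IsDyck m w) (h : GreedyLe m w w') :
    IsDyck m w' ∧ w.count true = w'.count true ∧ w.count false = w'.count false := by
  induction h with
  | refl => exact ⟨hw, rfl, rfl⟩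
  | tail h1 hc ih =>
    have hd := cover_dyck ih.1 hc
    have hcc := cover_counts hc
    exact ⟨hd, by omega, by omega⟩

/-- single-cover right monotonicity -/
theorem cover_star_right {a x x' : List Bool} (ha : IsDyck m a) (hane : a ≠ [])
    (hx : IsDyck m x) (h : GreedyCover m x x') :
    GreedyCover m (_root_.star m a x) (_root_.star m a x') := by
  obtain ⟨R, t, hstr, hfd, hmt⟩ := dstructure ha hane
  obtain ⟨u, d, v, hdne, hd, hxeq, hx'eq, hlong⟩ := h
  refine ⟨R ++ u, d, v ++ List.replicate (t - m) false, hdne, hd, ?_, ?_, ?_⟩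
  · rw [star_eq R x hstr, hxeq]
    simp
  · rw [star_eq R x' hstr, hx'eq]
    simp
  · intro D' hD' hD'dyck
    rw [← List.append_assoc] at hD'
    rcases prefix_cases hD' with h1 | ⟨r, hr, rfl⟩
    · exact hlong D' h1 hD'dyck
    · obtain ⟨hrrep, hrlen⟩ := prefix_replicate hr
      -- r must be empty
      have h3 := dpref hD'dyck (⟨r, rfl⟩ : d ++ v <+: (d ++ v) ++ r)
      have h4 := hD'dyck.1
      have h5 := hx.1
      rw [hxeq] at h5
      have h6 : u ++ [false] <+: x := by
        rw [hxeq]; exact ⟨d ++ v, by simp⟩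
      have h7 := dpref hx h6
      rw [hrrep] at h4
      simp [List.count_append, List.count_cons, List.count_replicate, Nat.mul_add] at h3 h4 h5 h7
      have hrnil : r = [] := by
        have h8 : r.length = 0 := by omega
        exact List.eq_nil_of_length_eq_zero h8
      rw [hrnil] at hD'dyck ⊢
      simp only [List.append_nil] at hD'dyck ⊢
      exact hlong _ (List.prefix_refl _) hD'dyck

/-- single-cover left monotonicity -/
theorem cover_star_left {a a' x : List Bool} (ha : IsDyck m a)
    (hx : IsDyck m x) (hxne : x ≠ []) (h : GreedyCover m a a') :
    GreedyCover m (_root_.star m a x) (_root_.star m a' x) := by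
  obtain ⟨u, d, v, hdne, hd, haeq, ha'eq, hlong⟩ := h
  rcases Nat.eq_zero_or_pos (v.count true) with hv0 | hvpos
  · -- Case B : v is all false
    have hvrep : v = List.replicate v.length false := by
      apply List.eq_replicate_of_mem
      intro b hb
      cases b
      · rfl
      · exfalso
        have := List.count_pos_iff.mpr hb
        omega
    obtain ⟨Q, td, hdstr, hdfd, hmtd⟩ := dstructure hd hdne
    obtain ⟨e, hvrep⟩ : ∃ e, v = List.replicate e false := ⟨v.length, hvrep⟩
    clear hv0
    have hra : List.replicate (td + e) false = List.replicate td false ++ List.replicate e false :=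
      List.replicate_add td e false
    have hra' : List.replicate (td + (e + 1)) false
        = List.replicate td false ++ (false :: List.replicate e false) := by
      rw [List.replicate_add, List.replicate_succ]
    have hastr : a = (u ++ false :: Q) ++ true :: List.replicate (td + e) false := by
      rw [haeq, hdstr, hvrep, hra]
      simp [List.append_assoc]
    have ha'str : a' = (u ++ Q) ++ true :: List.replicate (td + (e + 1)) false := by
      rw [ha'eq, hdstr, hvrep, hra']
      simp [List.append_assoc]
    have hDW : _root_.star m d x = Q ++ x ++ List.replicate (td - m) false := star_eq Q x hdstr
    refine ⟨u, Q ++ x ++ List.replicate (td - m) false, List.replicate e false, ?_, ?_, ?_, ?_, ?_⟩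
    · rw [← hDW]; exact star_ne hxne
    · rw [← hDW]; exact star_dyck hd hdne hx
    · rw [star_eq _ x hastr]
      have : td + e - m = (td - m) + e := by omega
      rw [this, List.replicate_add]
      simp [List.append_assoc]
    · rw [star_eq _ x ha'str]
      have h9 : List.replicate (td + (e + 1) - m) false
          = List.replicate (td - m) false ++ (false :: List.replicate e false) := by
        have h10 : td + (e + 1) - m = (td - m) + (e + 1) := by omega
        rw [h10, List.replicate_add, List.replicate_succ]
      rw [h9]
      simp [List.append_assoc]
    · intro D' hD' hD'dyck
      have hsplit : Q ++ x ++ List.replicate (td - m) false ++ List.replicate e false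
          = (Q ++ x) ++ List.replicate ((td - m) + e) false := by
        rw [List.replicate_add]
        simp [List.append_assoc]
      rw [hsplit] at hD'
      rcases prefix_cases hD' with h1 | ⟨r, hr, rfl⟩
      · have h2 := h1.length_le
        simp only [List.length_append, List.length_replicate] at h2 ⊢
        omega
      · obtain ⟨hrrep, hrlen⟩ := prefix_replicate hr
        have h3 := dpref hD'dyck (⟨r, rfl⟩ : Q ++ x <+: Q ++ x ++ r)
        have h4 := hD'dyck.1
        have h5 := hd.1
        rw [hdstr] at h5
        have h6 := hx.1
        rw [hrrep] at h4
        rw [hrrep]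
        simp [List.count_append, List.count_cons, List.count_replicate, List.length_append,
          List.length_replicate, Nat.mul_add] at h3 h4 h5 h6 ⊢
        omega
  · -- Case A : v contains a true
    obtain ⟨v', e, hveq, hvfd⟩ := split_last_true (List.count_pos_iff.mp hvpos)
    have hastr : a = (u ++ false :: (d ++ v')) ++ true :: List.replicate e false := by
      rw [haeq, hveq]; simp [List.append_assoc]
    have ha'str : a' = (u ++ d ++ false :: v') ++ true :: List.replicate e false := by
      rw [ha'eq, hveq]; simp [List.append_assoc]
    -- m ≤ e since e is the final descent of the Dyck word a
    have hme : m ≤ e := by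
      obtain ⟨R2, t2, hstr2, hfd2, hmt2⟩ := dstructure ha (by rw [hastr]; simp)
      have : finalDescent a = e := by rw [hastr]; exact fd_eq _ _
      omega
    refine ⟨u, d, v' ++ x ++ List.replicate (e - m) false, hdne, hd, ?_, ?_, ?_⟩
    · rw [star_eq _ x hastr]
      simp [List.append_assoc]
    · rw [star_eq _ x ha'str]
      simp [List.append_assoc]
    · intro D' hD' hD'dyck
      have hsplit : d ++ (v' ++ x ++ List.replicate (e - m) false)
          = (d ++ v') ++ (x ++ List.replicate (e - m) false) := by
        simp [List.append_assoc]
      rw [hsplit] at hD'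
      rcases prefix_cases hD' with h1 | ⟨y, hy, rfl⟩
      · -- D' within d ++ v'
        apply hlong D' _ hD'dyck
        calc D' <+: d ++ v' := h1
        _ <+: d ++ v := by rw [hveq]; exact ⟨true :: List.replicate e false, by simp⟩
      · -- D' = (d ++ v') ++ y
        exfalso
        have hpre_dv' := dpref hD'dyck (⟨y, rfl⟩ : d ++ v' <+: d ++ v' ++ y)
        have hbal := hD'dyck.1
        rcases prefix_cases hy with hyx | ⟨r, hr, rfl⟩
        · -- y a prefix of x : derive v' = [] and contradiction
          have h6 := dpref hx hyx
          have h7 : d ++ v' <+: d ++ v' ++ y := ⟨y, rfl⟩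
          -- balance forces d++v' Dyck
          have hdv'bal : (d ++ v').count false = m * (d ++ v').count true := by
            simp [List.count_append, Nat.mul_add] at hbal hpre_dv' h6 ⊢
            omega
          have hdv'dyck : IsDyck m (d ++ v') := ⟨hdv'bal, fun p hp => dpref hD'dyck (hp.trans h7)⟩
          have h8 := hlong (d ++ v')
            (by rw [hveq]; exact ⟨true :: List.replicate e false, by simp⟩) hdv'dyck
          have hv'nil : v' = [] := by
            have h9 : d.length + v'.length ≤ d.length := by simpa using h8
            exact List.eq_nil_of_length_eq_zero (by omega)
          -- now D'' = d ++ true :: replicate m false contradicts hlong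
          have hD'' : d ++ true :: List.replicate m false <+: d ++ v := by
            rw [hveq, hv'nil]
            simp only [List.nil_append]
            refine ⟨List.replicate (e - m) false, ?_⟩
            simp [List.append_assoc, ← List.replicate_add]
            congr 2
            omega
          have hD''dyck : IsDyck m (d ++ true :: List.replicate m false) := by
            constructor
            · have := hd.1
              simp [List.count_append, List.count_cons, List.count_replicate, Nat.mul_add]
              omega
            · intro p hp
              rcases prefix_cases hp with hp1 | ⟨q, hq, rfl⟩
              · exact dpref hd hp1
              · rcases (List.prefix_cons_iff.mp hq) with h0 | ⟨s, rfl, hs⟩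
                · subst h0
                  simpa using dpref hd (List.prefix_refl d)
                · obtain ⟨hsrep, hslen⟩ := prefix_replicate hs
                  have := hd.1
                  rw [hsrep]
                  simp [List.count_append, List.count_cons, List.count_replicate, Nat.mul_add]
                  omega
          have h20 := hlong _ hD'' hD''dyck
          simp only [List.length_append, List.length_cons, List.length_replicate] at h20
          omega
        · -- y = x ++ r with r a prefix of the final replicate
          obtain ⟨hrrep, hrlen⟩ := prefix_replicate hr
          set j := r.length with hj
          -- D'' = (d ++ v') ++ true :: replicate (j + m) false
          have hbal2 : (d ++ v').count false + j = m * (d ++ v').count true := by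
            have h6 := hx.1
            rw [hrrep] at hbal
            simp [List.count_append, List.count_replicate, Nat.mul_add] at hbal hpre_dv' ⊢
            omega
          have hD'' : (d ++ v') ++ true :: List.replicate (j + m) false <+: d ++ v := by
            rw [hveq, ← List.append_assoc]
            refine ⟨List.replicate (e - (j + m)) false, ?_⟩
            simp only [List.append_assoc, List.cons_append, List.append_cancel_left_eq]
            congr 1
            rw [← List.replicate_add]
            congr 1
            omega
          have hD''dyck : IsDyck m ((d ++ v') ++ true :: List.replicate (j + m) false) := by
            constructor
            · simp [List.count_append, List.count_cons, List.count_replicate, Nat.mul_add] at hbal2 ⊢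
              omega
            · intro p hp
              rcases prefix_cases hp with hp1 | ⟨q, hq, rfl⟩
              · exact dpref hD'dyck (hp1.trans ⟨x ++ r, rfl⟩)
              · rcases (List.prefix_cons_iff.mp hq) with h0 | ⟨s, rfl, hs⟩
                · subst h0
                  simpa using hpre_dv'
                · obtain ⟨hsrep, hslen⟩ := prefix_replicate hs
                  rw [hsrep]
                  simp [List.count_append, List.count_cons, List.count_replicate, Nat.mul_add] at hbal2 hpre_dv' ⊢
                  omega
          have h20 := hlong _ hD'' hD''dyck
          simp only [List.length_append, List.length_cons, List.length_replicate] at h20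
          omega

/-- chain right monotonicity -/
theorem le_star_right {a x x' : List Bool} (ha : IsDyck m a) (hane : a ≠ [])
    (hx : IsDyck m x) (h : GreedyLe m x x') :
    GreedyLe m (_root_.star m a x) (_root_.star m a x') := by
  induction h with
  | refl => exact Relation.ReflTransGen.refl
  | tail h1 hc ih =>
    exact ih.tail (cover_star_right ha hane (le_dyck hx h1).1 hc)

/-- chain left monotonicity -/
theorem le_star_left {a a' x : List Bool} (ha : IsDyck m a) (hane : a ≠ [])
    (hx : IsDyck m x) (hxne : x ≠ []) (h : GreedyLe m a a') :
    GreedyLe m (_root_.star m a x) (_root_.star m a' x) := by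
  induction h with
  | refl => exact Relation.ReflTransGen.refl
  | tail h1 hc ih =>
    exact ih.tail (cover_star_left (le_dyck ha h1).1 hx hxne hc)

end DyckAux

namespace DyckAux

open List

variable {m : ℕ}

theorem split_at_false {A B u rest : List Bool} (h : A ++ B = u ++ false :: rest)
    (hlt : u.length < A.length) : ∃ Q, A = u ++ false :: Q ∧ Q ++ B = rest := by
  have h1 : u ++ [false] <+: A := by
    apply List.prefix_of_prefix_length_le _ (List.prefix_append A B) ?len
    · rw [h]
      exact ⟨rest, by simp⟩
    case len => simp; omega
  obtain ⟨Q, hQ⟩ := h1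
  refine ⟨Q, by rw [← hQ]; simp, ?_⟩
  rw [← hQ] at h
  simp only [List.append_assoc, List.cons_append, List.singleton_append,
    List.append_cancel_left_eq, List.cons.injEq, true_and] at h
  exact h

theorem dyck_prefix_confined {Q A q0 : List Bool} (hq0 : q0 <+: Q)
    (hbad : ¬ q0.count false ≤ m * q0.count true) {D1 : List Bool}
    (hD1 : D1 <+: Q ++ A) (hdy : IsDyck m D1) : D1 <+: Q := by
  rcases prefix_cases hD1 with h | ⟨r, hr, rfl⟩
  · exact h
  · exact absurd (dpref hdy (hq0.trans ⟨r, rfl⟩)) hbad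

/-- **Key splitting lemma**: a greedy cover of `h * x` is a cover of `h` or of `x`. -/
theorem cover_star_split {h x W' : List Bool} (hh : IsDyck m h) (hhne : h ≠ [])
    (hx : IsDyck m x) (hxne : x ≠ [])
    (hc : GreedyCover m (_root_.star m h x) W') :
    (∃ h₂, GreedyCover m h h₂ ∧ W' = _root_.star m h₂ x) ∨
    (∃ x₂, GreedyCover m x x₂ ∧ W' = _root_.star m h x₂) := by
  obtain ⟨P, f, hstr, hfd, hmf⟩ := dstructure hh hhne
  obtain ⟨u, D, V, hDne, hDdyck, hWeq, hW'eq, hlong⟩ := hc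
  rw [star_eq P x hstr] at hWeq
  rw [List.append_assoc] at hWeq
  -- hWeq : P ++ (x ++ replicate (f-m) false) = u ++ false :: (D ++ V)
  rcases lt_or_ge u.length P.length with hu | hu
  · -- the moved 0 is inside P (the "h part")
    left
    obtain ⟨Q, hPQ, hQeq⟩ := split_at_false hWeq hu
    have hheq : h = u ++ false :: (Q ++ true :: List.replicate f false) := by
      rw [hstr, hPQ]; simp
    have huf : u.count false + 1 ≤ m * u.count true := by
      have := dpref hh (⟨Q ++ true :: List.replicate f false, by rw [hheq]; simp⟩ :
        u ++ [false] <+: h)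
      simpa [List.count_append] using this
    have hbalh := hh.1
    rw [hheq] at hbalh
    simp [List.count_append, List.count_cons, List.count_replicate, Nat.mul_add] at hbalh
    by_cases hQpos : ∀ q, q <+: Q → q.count false ≤ m * q.count true
    · -- (b2) : D = Q ++ x ++ 0^σ, the 0 hops over everything
      set σ := m * Q.count true - Q.count false with hσdef
      have hσ : Q.count false + σ = m * Q.count true := by
        have := hQpos Q (List.prefix_refl Q)
        omega
      have hσf : σ + m ≤ f := by omega
      have hrepsplit : List.replicate (f - m) false
          = List.replicate σ false ++ List.replicate (f - m - σ) false := by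
        rw [← List.replicate_add]
        congr 1
        omega
      -- the candidate block
      have hDcanddyck : IsDyck m (Q ++ x ++ List.replicate σ false) := by
        constructor
        · have := hx.1
          simp [List.count_append, List.count_replicate, Nat.mul_add]
          omega
        · intro p hp
          rcases prefix_cases hp with hp1 | ⟨r, hr, rfl⟩
          · rcases prefix_cases hp1 with hp2 | ⟨q, hq, rfl⟩
            · exact hQpos p hp2
            · have := dpref hx hq
              have := hQpos Q (List.prefix_refl Q)
              simp [List.count_append, Nat.mul_add]
              omega
          · obtain ⟨hrrep, hrlen⟩ := prefix_replicate hr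
            have := hx.1
            rw [hrrep]
            simp [List.count_append, List.count_replicate, Nat.mul_add]
            omega
      have hDcandpre : Q ++ x ++ List.replicate σ false <+: D ++ V := by
        rw [← hQeq, hrepsplit]
        exact ⟨List.replicate (f - m - σ) false, by simp [List.append_assoc]⟩
      have hlen1 := hlong _ hDcandpre hDcanddyck
      -- D is itself a prefix of Q ++ x ++ 0^(f-m)
      have hDpre : D <+: (Q ++ x) ++ List.replicate (f - m) false := by
        refine ⟨V, ?_⟩
        rw [hQeq.symm]
        simp [List.append_assoc]
      have hDeq : D = Q ++ x ++ List.replicate σ false := by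
        rcases prefix_cases hDpre with hD1 | ⟨r, hr, rfl⟩
        · -- D within Q ++ x : forces σ = 0 and D = Q ++ x
          have hlen2 := hD1.length_le
          simp only [List.length_append, List.length_replicate] at hlen1 hlen2
          have hσ0 : σ = 0 := by omega
          have hDQx : D = Q ++ x := hD1.eq_of_length (by simp; omega)
          rw [hDQx, hσ0]
          simp
        · obtain ⟨hrrep, hrlen⟩ := prefix_replicate hr
          have hbalD := hDdyck.1
          have hxb := hx.1
          rw [hrrep] at hbalD ⊢
          simp [List.count_append, List.count_replicate, Nat.mul_add] at hbalD
          have : r.length = σ := by omega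
          rw [this]
      -- compute V
      have hVeq : V = List.replicate (f - m - σ) false := by
        have h2 : D ++ List.replicate (f - m - σ) false = D ++ V := by
          conv_rhs => rw [← hQeq]
          rw [hrepsplit, hDeq]
          simp [List.append_assoc]
        exact ((List.append_inj h2.symm rfl).2)
      -- the full-hop cover of h
      have hrepf : List.replicate f false
          = List.replicate (σ + m) false ++ List.replicate (f - σ - m) false := by
        rw [← List.replicate_add]
        congr 1
        omega
      refine ⟨u ++ (Q ++ true :: List.replicate (σ + m) false) ++
          false :: List.replicate (f - σ - m) false,
        ⟨u, Q ++ true :: List.replicate (σ + m) false, List.replicate (f - σ - m) false,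
          by simp, ?_, ?_, rfl, ?_⟩, ?_⟩
      · -- dh is Dyck
        constructor
        · simp [List.count_append, List.count_cons, List.count_replicate, Nat.mul_add]
          omega
        · intro p hp
          rcases prefix_cases hp with hp1 | ⟨r, hr, rfl⟩
          · exact hQpos p hp1
          · rcases (List.prefix_cons_iff.mp hr) with h0 | ⟨s, rfl, hs⟩
            · subst h0
              simpa using hQpos Q (List.prefix_refl Q)
            · obtain ⟨hsrep, hslen⟩ := prefix_replicate hs
              have := hQpos Q (List.prefix_refl Q)
              rw [hsrep]
              simp [List.count_append, List.count_cons, List.count_replicate, Nat.mul_add]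
              omega
      · -- h equation
        rw [hheq, hrepf]
        simp [List.append_assoc]
      · -- longest condition for the h-cover
        intro D' hD' hdy'
        have hD'2 : D' <+: Q ++ true :: List.replicate f false := by
          rw [hrepf]
          rw [show Q ++ true :: (List.replicate (σ + m) false ++ List.replicate (f - σ - m) false)
            = (Q ++ true :: List.replicate (σ + m) false) ++ List.replicate (f - σ - m) false
            by simp [List.append_assoc]]
          exact hD'
        rcases prefix_cases hD'2 with hp1 | ⟨r, hr, rfl⟩
        · have := hp1.length_le
          simp only [List.length_append, List.length_cons, List.length_replicate]
          omega
        · rcases (List.prefix_cons_iff.mp hr) with h0 | ⟨s, rfl, hs⟩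
          · subst h0
            simp only [List.length_append, List.length_cons, List.length_replicate,
              List.append_nil]
            omega
          · obtain ⟨hsrep, hslen⟩ := prefix_replicate hs
            have hbal' := hdy'.1
            rw [hsrep] at hbal' ⊢
            simp only [List.length_append, List.length_cons, List.length_replicate]
            simp [List.count_append, List.count_cons, List.count_replicate, Nat.mul_add] at hbal'
            omega
      · -- W' = star m h₂ x
        have hmerge : List.replicate (σ + m) false ++ false :: List.replicate (f - σ - m) false
            = List.replicate (f + 1) false := by
          have h10 : f + 1 = (σ + m) + ((f - σ - m) + 1) := by omega
          conv_rhs => rw [h10, List.replicate_add, List.replicate_succ]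
        have hstr2 : u ++ (Q ++ true :: List.replicate (σ + m) false) ++
            false :: List.replicate (f - σ - m) false
            = (u ++ Q) ++ true :: List.replicate (f + 1) false := by
          rw [← hmerge]
          simp [List.append_assoc]
        rw [star_eq _ x hstr2, hW'eq, hDeq, hVeq]
        have hmerge2 : List.replicate (f + 1 - m) false
            = List.replicate σ false ++ false :: List.replicate (f - m - σ) false := by
          have h10 : f + 1 - m = σ + ((f - m - σ) + 1) := by omega
          conv_lhs => rw [h10, List.replicate_add, List.replicate_succ]
        rw [hmerge2]
        simp [List.append_assoc]
    · -- (b1) : D stays inside Q ; the cover of h uses the same block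
      push_neg at hQpos
      obtain ⟨q0, hq0pre, hq0bad⟩ := hQpos
      have hDQ : D <+: Q :=
        dyck_prefix_confined (A := x ++ List.replicate (f - m) false) hq0pre (by omega)
          ⟨V, hQeq.symm⟩ hDdyck
      obtain ⟨Q', hQ'⟩ := hDQ
      have hVeq : V = Q' ++ (x ++ List.replicate (f - m) false) := by
        rw [← hQ'] at hQeq
        rw [List.append_assoc] at hQeq
        exact (List.append_inj hQeq.symm rfl).2
      refine ⟨u ++ D ++ false :: (Q' ++ true :: List.replicate f false), ⟨u, D,
        Q' ++ true :: List.replicate f false, hDne, hDdyck, ?_, rfl, ?_⟩, ?_⟩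
      · rw [hheq, ← hQ']
        simp [List.append_assoc]
      · intro D' hD' hdy'
        have hQform : Q ++ (true :: List.replicate f false)
            = D ++ (Q' ++ true :: List.replicate f false) := by
          rw [← hQ']
          simp [List.append_assoc]
        have hD'Q : D' <+: Q :=
          dyck_prefix_confined hq0pre (by omega) (by rw [hQform]; exact hD') hdy'
        apply hlong D' _ hdy'
        exact hD'Q.trans ⟨x ++ List.replicate (f - m) false, hQeq⟩
      · -- W' = star m h₂ x
        have hstr2 : u ++ D ++ false :: (Q' ++ true :: List.replicate f false)
            = (u ++ D ++ false :: Q') ++ true :: List.replicate f false := by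
          simp [List.append_assoc]
        rw [star_eq _ x hstr2, hW'eq, hVeq]
        simp [List.append_assoc]
  · -- the moved 0 is inside x (or impossible)
    right
    have hPu : P <+: u := by
      have h1 : P <+: P ++ (x ++ List.replicate (f - m) false) := ⟨_, rfl⟩
      have h2 : u <+: P ++ (x ++ List.replicate (f - m) false) := ⟨false :: (D ++ V), hWeq.symm⟩
      exact List.prefix_of_prefix_length_le h1 h2 hu
    obtain ⟨u', hu'⟩ := hPu
    have hxrep : x ++ List.replicate (f - m) false = u' ++ false :: (D ++ V) := by
      rw [← hu'] at hWeq
      rw [List.append_assoc] at hWeq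
      exact (List.append_inj hWeq rfl).2
    rcases lt_or_ge u'.length x.length with hux | hux
    · obtain ⟨x₁, hxeq, hx1eq⟩ := split_at_false hxrep hux
      have hu'f : u'.count false + 1 ≤ m * u'.count true := by
        have := dpref hx (⟨x₁, by rw [hxeq]; simp⟩ : u' ++ [false] <+: x)
        simpa [List.count_append] using this
      have hbalx := hx.1
      rw [hxeq] at hbalx
      simp [List.count_append, List.count_cons, Nat.mul_add] at hbalx
      -- D is a prefix of x₁
      have hDx1 : D <+: x₁ := by
        have hDpre : D <+: x₁ ++ List.replicate (f - m) false := ⟨V, by rw [hx1eq.symm]⟩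
        rcases prefix_cases hDpre with h1 | ⟨r, hr, rfl⟩
        · exact h1
        · obtain ⟨hrrep, hrlen⟩ := prefix_replicate hr
          have hbalD := hDdyck.1
          have h3 := dpref hDdyck (⟨r, rfl⟩ : x₁ <+: x₁ ++ r)
          rw [hrrep] at hbalD
          simp [List.count_append, List.count_replicate, Nat.mul_add] at hbalD h3
          have : r.length = 0 := by omega
          have hrnil : r = [] := List.eq_nil_of_length_eq_zero this
          rw [hrnil]
          simp
      obtain ⟨x₃, hx₃⟩ := hDx1
      have hVeq : V = x₃ ++ List.replicate (f - m) false := by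
        have h5 := hx1eq
        rw [← hx₃, List.append_assoc] at h5
        exact ((List.append_inj h5 rfl).2).symm
      refine ⟨u' ++ D ++ false :: x₃, ⟨u', D, x₃, hDne, hDdyck, ?_, rfl, ?_⟩, ?_⟩
      · rw [hxeq, ← hx₃]
      · intro D' hD' hdy'
        apply hlong D' _ hdy'
        refine (hD'.trans ?_)
        exact ⟨List.replicate (f - m) false, by rw [hVeq]; simp [List.append_assoc]⟩
      · rw [star_eq P _ hstr, hW'eq, ← hu', hVeq]
        simp [List.append_assoc]
    · -- the 0 would be in the trailing replicate : impossible
      exfalso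
      have hxu' : x <+: u' := by
        have h1 : x <+: x ++ List.replicate (f - m) false := ⟨_, rfl⟩
        have h2 : u' <+: x ++ List.replicate (f - m) false := ⟨false :: (D ++ V), hxrep.symm⟩
        exact List.prefix_of_prefix_length_le h1 h2 hux
      obtain ⟨z, hz⟩ := hxu'
      have hrepeq : List.replicate (f - m) false = z ++ false :: (D ++ V) := by
        rw [← hz, List.append_assoc] at hxrep
        exact (List.append_inj hxrep rfl).2
      obtain ⟨t, hDt⟩ := head_true hDdyck hDne
      have : true ∈ List.replicate (f - m) false := by
        rw [hrepeq, hDt]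
        simp
      exact absurd (List.eq_of_mem_replicate this) (by simp)

end DyckAux

namespace DyckAux

open List

variable {m : ℕ}

/-- chain version of the splitting lemma -/
theorem le_star_split {h x W : List Bool} (hh : IsDyck m h) (hhne : h ≠ [])
    (hx : IsDyck m x) (hxne : x ≠ [])
    (hle : GreedyLe m (_root_.star m h x) W) :
    ∃ h₂ x₂, IsDyck m h₂ ∧ IsDyck m x₂ ∧ GreedyLe m h h₂ ∧ GreedyLe m x x₂ ∧
      W = _root_.star m h₂ x₂ := by
  induction hle with
  | refl => exact ⟨h, x, hh, hx, Relation.ReflTransGen.refl, Relation.ReflTransGen.refl, rfl⟩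
  | tail h1 hc ih =>
    obtain ⟨h₂, x₂, hd2, hd3, hle2, hle3, rfl⟩ := ih
    have hne2 : h₂ ≠ [] := ne_nil_of_count (by
      rw [← (le_dyck hh hle2).2.1]; exact count_true_pos hh hhne)
    have hne3 : x₂ ≠ [] := ne_nil_of_count (by
      rw [← (le_dyck hx hle3).2.1]; exact count_true_pos hx hxne)
    rcases cover_star_split hd2 hne2 hd3 hne3 hc with ⟨h₃, hc3, rfl⟩ | ⟨x₃, hc3, rfl⟩
    · exact ⟨h₃, x₂, cover_dyck hd2 hc3, hd3, hle2.tail hc3, hle3, rfl⟩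
    · exact ⟨h₂, x₃, hd2, cover_dyck hd3 hc3, hle2, hle3.tail hc3, rfl⟩

/-- concatenation of blocks `a ++ [0]` -/
def blocksW (B : List (List Bool)) : List Bool := (B.map (fun a => a ++ [false])).flatten

theorem blocksW_nil : blocksW [] = [] := rfl

theorem blocksW_cons (a : List Bool) (B : List (List Bool)) :
    blocksW (a :: B) = a ++ false :: blocksW B := by
  simp [blocksW]

theorem blocksW_append (B₁ B₂ : List (List Bool)) :
    blocksW (B₁ ++ B₂) = blocksW B₁ ++ blocksW B₂ := by
  simp [blocksW]

theorem blocksW_all_nil {B : List (List Bool)} (h : ∀ a ∈ B, a = []) :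
    blocksW B = List.replicate B.length false := by
  induction B with
  | nil => rfl
  | cons a T ih =>
    rw [blocksW_cons, h a (by simp), ih (fun b hb => h b (by simp [hb]))]
    simp [List.replicate_succ]

/-- budgeted Dyck condition for block words. -/
theorem jw_dyck {k : ℕ} {B : List (List Bool)} {x : List Bool}
    (hB : ∀ a ∈ B, IsDyck m a) (hx : IsDyck m x) (hlen : B.length ≤ k) :
    (blocksW B ++ x ++ List.replicate (k - B.length) false).count false
      = m * (blocksW B ++ x ++ List.replicate (k - B.length) false).count true + k ∧
    ∀ p, p <+: blocksW B ++ x ++ List.replicate (k - B.length) false →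
      p.count false ≤ m * p.count true + k := by
  induction B generalizing k with
  | nil =>
    simp only [blocksW_nil, List.nil_append, List.length_nil, Nat.sub_zero]
    constructor
    · have := hx.1
      simp [List.count_append, List.count_replicate]
      omega
    · intro p hp
      rcases prefix_cases hp with h1 | ⟨r, hr, rfl⟩
      · have := dpref hx h1
        omega
      · obtain ⟨hrrep, hrlen⟩ := prefix_replicate hr
        have := hx.1
        rw [hrrep]
        simp [List.count_append, List.count_replicate]
        omega
  | cons a T ih =>
    have hk1 : 1 ≤ k := by
      have := hlen
      simp at this
      omega
    have hTlen : T.length ≤ k - 1 := by simp at hlen; omega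
    have hrw : k - (a :: T).length = (k - 1) - T.length := by simp; omega
    have hadyck := hB a (by simp)
    have ihT := ih (fun b hb => hB b (by simp [hb])) hTlen
    rw [blocksW_cons, hrw]
    have hassoc : (a ++ false :: blocksW T) ++ x ++ List.replicate (k - 1 - T.length) false
        = a ++ false :: (blocksW T ++ x ++ List.replicate (k - 1 - T.length) false) := by
      simp [List.append_assoc]
    rw [hassoc]
    constructor
    · have h1 := ihT.1
      have h2 := hadyck.1
      simp [List.count_append, List.count_cons, Nat.mul_add] at h1 ⊢
      omega
    · intro p hp
      rcases prefix_cases (by simpa using hp :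
          p <+: a ++ (false :: (blocksW T ++ x ++ List.replicate (k - 1 - T.length) false)))
        with h1 | ⟨r, hr, rfl⟩
      · have := dpref hadyck h1
        omega
      · rcases (List.prefix_cons_iff.mp hr) with h0 | ⟨s, rfl, hs⟩
        · subst h0
          have := hadyck.1
          simp [List.count_append]
          omega
        · have h3 := ihT.2 s hs
          have h4 := hadyck.1
          simp [List.count_append, List.count_cons, Nat.mul_add] at h3 ⊢
          omega

theorem jform_dyck {B : List (List Bool)} {x : List Bool}
    (hB : ∀ a ∈ B, IsDyck m a) (hx : IsDyck m x) (hlen : B.length ≤ m) :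
    IsDyck m (true :: (blocksW B ++ x ++ List.replicate (m - B.length) false)) := by
  obtain ⟨hbal, hpre⟩ := jw_dyck hB hx hlen (k := m)
  constructor
  · have h2 := hbal
    simp [List.count_cons, Nat.mul_add] at h2 ⊢
    omega
  · intro p hp
    rcases (List.prefix_cons_iff.mp hp) with h0 | ⟨s, rfl, hs⟩
    · simp [h0]
    · have := hpre s hs
      simp [List.count_cons, Nat.mul_add]
      omega

/-- existence of the first descent split -/
theorem first_drop {t : List Bool} (h : m * t.count true < t.count false) :
    ∃ a t', t = a ++ false :: t' ∧ IsDyck m a := by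
  have hP : ∃ n, m * (t.take n).count true < (t.take n).count false := by
    exact ⟨t.length, by simpa using h⟩
  classical
  let n₀ := Nat.find hP
  have hspec : m * (t.take n₀).count true < (t.take n₀).count false := Nat.find_spec hP
  have hmin : ∀ j, j < n₀ → ¬ (m * (t.take j).count true < (t.take j).count false) :=
    fun j hj => Nat.find_min hP hj
  have hn₀pos : 1 ≤ n₀ := by
    rcases Nat.eq_zero_or_pos n₀ with h0 | h1
    · exfalso
      have h2 := hspec
      simp [h0] at h2
    · exact h1
  have hn₀le : n₀ ≤ t.length := Nat.find_le (by simpa using h)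
  have hlt : n₀ - 1 < t.length := by omega
  have htake : t.take n₀ = t.take (n₀ - 1) ++ [t[n₀-1]] := by
    have h2 : n₀ = (n₀ - 1) + 1 := by omega
    conv_lhs => rw [h2]
    rw [List.take_succ]
    congr 1
    rw [List.getElem?_eq_getElem hlt]
    rfl
  have hprev := hmin (n₀ - 1) (by omega)
  push_neg at hprev
  have hfalse : t[n₀-1] = false := by
    by_contra hcontra
    have htrue : t[n₀-1] = true := by
      cases h' : t[n₀-1]
      · exact absurd h' hcontra
      · rfl
    rw [htake, htrue] at hspec
    simp [List.count_append, Nat.mul_add] at hspec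
    omega
  have hbal : (t.take (n₀ - 1)).count false = m * (t.take (n₀ - 1)).count true := by
    rw [htake, hfalse] at hspec
    simp [List.count_append] at hspec
    omega
  refine ⟨t.take (n₀ - 1), t.drop n₀, ?_, ?_⟩
  · conv_lhs => rw [← List.take_append_drop n₀ t]
    rw [htake, hfalse]
    simp
  · refine ⟨hbal, ?_⟩
    intro p hp
    have hp' : p <+: t := hp.trans (List.take_prefix _ t)
    have hpeq : p = t.take p.length := List.prefix_iff_eq_take.mp hp'
    have hplen : p.length ≤ n₀ - 1 := by
      have h9 := hp.length_le
      simp [List.length_take] at h9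
      omega
    have := hmin p.length (by omega)
    push_neg at this
    rw [← hpeq] at this
    exact this

/-- splitting a budgeted word into Dyck blocks. -/
theorem budget_split : ∀ (k : ℕ) (t : List Bool),
    t.count false = m * t.count true + k →
    (∀ p, p <+: t → p.count false ≤ m * p.count true + k) →
    ∃ B x, B.length = k ∧ (∀ a ∈ B, IsDyck m a) ∧ IsDyck m x ∧ t = blocksW B ++ x := by
  intro k
  induction k with
  | zero =>
    intro t hbal hpre
    refine ⟨[], t, rfl, by simp, ⟨by omega, fun p hp => ?_⟩, by simp [blocksW_nil]⟩
    have := hpre p hp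
    omega
  | succ k ih =>
    intro t hbal hpre
    obtain ⟨a, t', hteq, hadyck⟩ := first_drop (m := m) (t := t) (by omega)
    have hafalse : a ++ [false] <+: t := ⟨t', by rw [hteq]; simp⟩
    have habal := hadyck.1
    have ht'bal : t'.count false = m * t'.count true + k := by
      have := hbal
      rw [hteq] at this
      simp [List.count_append, List.count_cons, Nat.mul_add] at this ⊢
      omega
    have ht'pre : ∀ p, p <+: t' → p.count false ≤ m * p.count true + k := by
      intro p hp
      have h2 : a ++ false :: p <+: t := by
        rw [hteq]
        obtain ⟨r, hr⟩ := hp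
        exact ⟨r, by rw [← hr]; simp⟩
      have := hpre _ h2
      simp [List.count_append, List.count_cons, Nat.mul_add] at this
      omega
    obtain ⟨B, x, hBlen, hBdyck, hxdyck, ht'eq⟩ := ih t' ht'bal ht'pre
    refine ⟨a :: B, x, by simp [hBlen], ?_, hxdyck, ?_⟩
    · intro b hb
      rcases List.mem_cons.mp hb with rfl | hb2
      · exact hadyck
      · exact hBdyck b hb2
    · rw [hteq, ht'eq, blocksW_cons]
      simp

end DyckAux

namespace DyckAux

open List

variable {m : ℕ}

/-- pad a `Fin`-indexed family into a `ℕ`-indexed one. -/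
def padF (m : ℕ) (ws : Fin (m+1) → List Bool) : ℕ → List Bool :=
  fun t => if h : t < m + 1 then ws ⟨t, h⟩ else []

theorem ofFn_eq_map_range {n : ℕ} (f : Fin n → List Bool) :
    List.ofFn f = (List.range n).map (fun t => if h : t < n then f ⟨t, h⟩ else []) := by
  apply List.ext_getElem (by simp)
  intro i h1 h2
  have hi : i < n := by simpa using h1
  simp [List.getElem_ofFn, hi]

theorem flatten_const (l : List ℕ) :
    ((l.map (fun _ => ([false] : List Bool))).flatten) = List.replicate l.length false := by
  induction l with
  | nil => rfl
  | cons a T ih => simp [ih, List.replicate_succ]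

theorem dpath_blocks (ws : Fin (m+1) → List Bool) (i : Fin (m+1))
    (hpeak : ws i = peakWord m) (hzero : ∀ j, i < j → ws j = []) :
    Dpath m ws = true :: (blocksW ((List.range i.val).map (padF m ws))
      ++ true :: List.replicate (2*m - i.val) false) := by
  have him : i.val ≤ m := Nat.lt_succ_iff.mp i.isLt
  rw [Dpath, ofFn_eq_map_range]
  have hr : List.range m = List.range i.val ++ (List.range (m - i.val)).map (fun s => i.val + s) := by
    conv_lhs => rw [show m = i.val + (m - i.val) by omega]
    rw [List.range_add]
  rw [hr, List.map_append, List.flatten_append]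
  -- first part = blocksW
  have hfirst : ((List.range i.val).map
        (fun t => if h : t < m then ws (⟨t, h⟩ : Fin m).castSucc ++ [false] else [])).flatten
      = blocksW ((List.range i.val).map (padF m ws)) := by
    rw [blocksW, List.map_map]
    congr 1
    apply List.map_congr_left
    intro t ht
    have ht1 : t < i.val := List.mem_range.mp ht
    have ht2 : t < m := by omega
    have ht3 : t < m + 1 := by omega
    rw [dif_pos ht2]
    simp only [Function.comp_apply, padF, dif_pos ht3]
    rfl
  rw [hfirst]
  rcases Nat.lt_or_ge i.val m with hlt | hge
  · -- i.val < m
    have hlast : ws (Fin.last m) = [] := hzero _ (by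
      rw [Fin.lt_def]
      simpa using hlt)
    have hd : m - i.val = (m - i.val - 1) + 1 := by omega
    rw [hd, List.range_succ_eq_map]
    simp only [List.map_cons, List.map_map, List.flatten_cons]
    have hGi : (if h : i.val + 0 < m then ws (⟨i.val + 0, h⟩ : Fin m).castSucc ++ [false] else [])
        = (true :: List.replicate m false) ++ [false] := by
      rw [dif_pos (by omega : i.val + 0 < m)]
      have : (⟨i.val + 0, by omega⟩ : Fin m).castSucc = i := by
        apply Fin.ext
        simp
      rw [this, hpeak, peakWord]
    have hrest : ((List.range (m - i.val - 1)).map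
        ((fun t => if h : t < m then ws (⟨t, h⟩ : Fin m).castSucc ++ [false] else []) ∘
          ((fun s => i.val + s) ∘ Nat.succ))).flatten
        = List.replicate (m - i.val - 1) false := by
      rw [show ((List.range (m - i.val - 1)).map
          ((fun t => if h : t < m then ws (⟨t, h⟩ : Fin m).castSucc ++ [false] else []) ∘
            ((fun s => i.val + s) ∘ Nat.succ)))
          = (List.range (m - i.val - 1)).map (fun _ => ([false] : List Bool)) from ?_]
      · rw [flatten_const, List.length_range]
      apply List.map_congr_left
      intro s hs
      have hs1 : s < m - i.val - 1 := List.mem_range.mp hs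
      have hs2 : i.val + Nat.succ s < m := by omega
      simp only [Function.comp_apply, dif_pos hs2]
      have hz : ws (⟨i.val + Nat.succ s, by omega⟩ : Fin m).castSucc = [] := by
        apply hzero
        rw [Fin.lt_def]
        simp only [Fin.coe_castSucc]
        omega
      rw [hz]
      rfl
    rw [hGi, hrest, hlast]
    have hmerge : List.replicate m false ++ false :: (List.replicate (m - i.val - 1) false ++ [])
        = List.replicate (2*m - i.val) false := by
      simp only [List.append_nil]
      rw [show (2*m - i.val) = m + ((m - i.val - 1) + 1) by omega]
      rw [List.replicate_add, List.replicate_succ]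
    simp only [List.append_assoc, List.cons_append, List.append_nil] at hmerge ⊢
    rw [← hmerge]
    simp [List.append_assoc]
  · -- i.val = m
    have him2 : i.val = m := by omega
    have hieq : i = Fin.last m := by
      apply Fin.ext
      simp [him2]
    have h0 : m - i.val = 0 := by omega
    rw [h0]
    simp only [List.range_zero, List.map_nil, List.flatten_nil, List.nil_append]
    rw [← hieq, hpeak, peakWord]
    rw [show 2*m - i.val = m by omega]
    simp

/-- every generator is of block form. -/
theorem generator_blocks {g : List Bool} (hg : IsGenerator m g) :
    ∃ B : List (List Bool), (∀ a ∈ B, IsDyck m a) ∧ B.length ≤ m ∧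
      g = true :: (blocksW B ++ true :: List.replicate (2*m - B.length) false) := by
  obtain ⟨i, ws, hdyck, hpeak, hzero, hgeq⟩ := hg
  refine ⟨(List.range i.val).map (padF m ws), ?_, by simp; exact Nat.lt_succ_iff.mp i.isLt, ?_⟩
  · intro a ha
    obtain ⟨t, ht, rfl⟩ := List.mem_map.mp ha
    unfold padF
    split
    · exact hdyck _
    · exact dyck_nil
  · rw [hgeq, dpath_blocks ws i hpeak hzero]
    simp

/-- block form words are generators. -/
theorem blocks_generator {B : List (List Bool)} (hB : ∀ a ∈ B, IsDyck m a) (hlen : B.length ≤ m) :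
    IsGenerator m (true :: (blocksW B ++ true :: List.replicate (2*m - B.length) false)) := by
  classical
  set ws : Fin (m+1) → List Bool := fun j =>
    if h : j.val < B.length then B[j.val] else if j.val = B.length then peakWord m else []
    with hws
  have hi : B.length < m + 1 := by omega
  refine ⟨⟨B.length, hi⟩, ws, ?_, ?_, ?_, ?_⟩
  · intro j
    rw [hws]
    dsimp only
    split
    · exact hB _ (List.getElem_mem _)
    · split
      · exact peak_dyck
      · exact dyck_nil
  · rw [hws]
    simp
  · intro j hj
    rw [Fin.lt_def] at hj
    simp only at hj
    rw [hws]
    dsimp only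
    rw [dif_neg (by omega), if_neg (by omega)]
  · rw [dpath_blocks ws ⟨B.length, hi⟩ (by rw [hws]; simp) ?hz]
    case hz =>
      intro j hj
      rw [Fin.lt_def] at hj
      simp only at hj
      rw [hws]
      dsimp only
      rw [dif_neg (by omega), if_neg (by omega)]
    simp only [Fin.val_mk]
    have hmap : (List.range B.length).map (padF m ws) = B := by
      apply List.ext_getElem (by simp)
      intro t h1 h2
      have ht : t < B.length := by simpa using h2
      simp only [List.getElem_map, List.getElem_range]
      unfold padF
      rw [dif_pos (by omega : t < m + 1)]
      rw [hws]
      dsimp only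
      rw [dif_pos ht]
    rw [hmap]

/-- star with a generator in block form. -/
theorem gen_star_form {B : List (List Bool)} (hlen : B.length ≤ m) (x : List Bool) :
    _root_.star m (true :: (blocksW B ++ true :: List.replicate (2*m - B.length) false)) x
      = true :: (blocksW B ++ x ++ List.replicate (m - B.length) false) := by
  have hstr : true :: (blocksW B ++ true :: List.replicate (2*m - B.length) false)
      = (true :: blocksW B) ++ true :: List.replicate (2*m - B.length) false := by simp
  rw [star_eq _ x hstr]
  rw [show 2*m - B.length - m = m - B.length by omega]
  simp

theorem gen_dyck {B : List (List Bool)} (hB : ∀ a ∈ B, IsDyck m a) (hlen : B.length ≤ m) :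
    IsDyck m (true :: (blocksW B ++ true :: List.replicate (2*m - B.length) false)) := by
  have h1 := jform_dyck hB (peak_dyck (m := m)) hlen
  have h2 : blocksW B ++ peakWord m ++ List.replicate (m - B.length) false
      = blocksW B ++ true :: List.replicate (2*m - B.length) false := by
    rw [peakWord]
    rw [show 2*m - B.length = m + (m - B.length) by omega, List.replicate_add]
    simp [List.append_assoc]
  rw [← h2]
  exact h1

theorem gen_count_two {B : List (List Bool)} :
    2 ≤ (true :: (blocksW B ++ true :: List.replicate (2*m - B.length) false)).count true := by
  simp [List.count_cons, List.count_append, List.count_replicate]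

/-- extract the last nonempty entry of a list of lists. -/
theorem last_nonempty_split {B : List (List Bool)} (h : ∃ a ∈ B, a ≠ []) :
    ∃ B' a E, B = B' ++ a :: E ∧ a ≠ [] ∧ ∀ e ∈ E, e = [] := by
  induction B using List.reverseRecOn with
  | nil => simp at h
  | append_singleton T b ih =>
    by_cases hb : b = []
    · subst hb
      have h2 : ∃ a ∈ T, a ≠ [] := by
        obtain ⟨a, ha, hane⟩ := h
        rcases List.mem_append.mp ha with h3 | h3
        · exact ⟨a, h3, hane⟩
        · simp at h3
          exact absurd h3 hane
      obtain ⟨B', a, E, heq, hane, hE⟩ := ih h2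
      refine ⟨B', a, E ++ [[]], by rw [heq]; simp, hane, ?_⟩
      intro e he
      rcases List.mem_append.mp he with h3 | h3
      · exact hE e h3
      · simpa using h3
    · exact ⟨T, b, [], by simp, hb, by simp⟩

/-- canonical first-factor decomposition. -/
theorem exists_factor {v : List Bool} (hv : IsDyck m v) (hvne : v ≠ [])
    (hvpeak : v ≠ peakWord m) :
    ∃ g x, IsGenerator m g ∧ IsDyck m x ∧ x ≠ [] ∧ v = _root_.star m g x ∧
      x.count true < v.count true := by
  obtain ⟨t, rfl⟩ := head_true hv hvne
  have hbal : t.count false = m * t.count true + m := by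
    have := hv.1
    simp [List.count_cons, Nat.mul_add] at this
    omega
  have hpre : ∀ p, p <+: t → p.count false ≤ m * p.count true + m := by
    intro p hp
    have h2 : true :: p <+: true :: t := by
      obtain ⟨r, hr⟩ := hp
      exact ⟨r, by rw [← hr]; rfl⟩
    have := dpref hv h2
    simp [List.count_cons, Nat.mul_add] at this
    omega
  obtain ⟨B, x₀, hBlen, hBdyck, hx₀dyck, hteq⟩ := budget_split m t hbal hpre
  by_cases hx₀ne : x₀ = []
  · -- last nonempty block
    subst hx₀ne
    have hex : ∃ a ∈ B, a ≠ [] := by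
      by_contra hcon
      push_neg at hcon
      apply hvpeak
      rw [hteq, blocksW_all_nil hcon, hBlen, List.append_nil, peakWord]
    obtain ⟨B', a, E, hBeq, hane, hE⟩ := last_nonempty_split hex
    have hB'len : B'.length ≤ m := by
      rw [hBeq] at hBlen
      simp at hBlen
      omega
    have hB'dyck : ∀ b ∈ B', IsDyck m b := fun b hb => hBdyck b (by rw [hBeq]; simp [hb])
    refine ⟨true :: (blocksW B' ++ true :: List.replicate (2*m - B'.length) false), a,
      blocks_generator hB'dyck hB'len, hBdyck a (by rw [hBeq]; simp), hane, ?_, ?_⟩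
    · rw [gen_star_form hB'len]
      rw [hteq, hBeq, blocksW_append, blocksW_cons, blocksW_all_nil hE]
      have hElen : E.length = m - B'.length - 1 := by
        rw [hBeq] at hBlen
        simp at hBlen
        omega
      rw [hElen]
      rw [show m - B'.length = (m - B'.length - 1) + 1 by
        rw [hBeq] at hBlen; simp at hBlen; omega]
      rw [List.replicate_succ]
      simp [List.append_assoc]
    · rw [hteq, hBeq, blocksW_append, blocksW_cons]
      simp [List.count_cons, List.count_append]
      omega
  · -- the last component is nonempty
    have hBlenle : B.length ≤ m := le_of_eq hBlen
    refine ⟨true :: (blocksW B ++ true :: List.replicate (2*m - B.length) false), x₀,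
      blocks_generator hBdyck hBlenle, hx₀dyck, hx₀ne, ?_, ?_⟩
    · rw [gen_star_form hBlenle, hteq]
      rw [hBlen]
      simp
    · rw [hteq]
      simp [List.count_cons, List.count_append]

end DyckAux

namespace DyckAux

open List

variable {m : ℕ}

theorem no_strict_dyck_ext {a₁ a₂ : List Bool} (h₁ : IsDyck m a₁) (h₂ : IsDyck m a₂)
    (hpf : a₁ ++ [false] <+: a₂) : False := by
  have h3 := dpref h₂ hpf
  have h4 := h₁.1
  simp [List.count_append] at h3
  omega

theorem dyck_head_eq {a₁ a₂ A B : List Bool} (h : a₁ ++ false :: A = a₂ ++ false :: B)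
    (h₁ : IsDyck m a₁) (h₂ : IsDyck m a₂) : a₁ = a₂ := by
  have hw1 : a₁ <+: a₁ ++ false :: A := ⟨false :: A, rfl⟩
  have hw : a₂ <+: a₁ ++ false :: A := ⟨false :: B, h.symm⟩
  rcases List.prefix_or_prefix_of_prefix hw1 hw with hp | hp
  · rcases Nat.lt_or_ge a₁.length a₂.length with hl | hl
    · exfalso
      have h5 : a₁ ++ [false] <+: a₁ ++ false :: A := ⟨A, by simp⟩
      have hpf : a₁ ++ [false] <+: a₂ :=
        List.prefix_of_prefix_length_le h5 hw (by simp; omega)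
      exact no_strict_dyck_ext h₁ h₂ hpf
    · exact hp.eq_of_length (le_antisymm hp.length_le hl)
  · rcases Nat.lt_or_ge a₂.length a₁.length with hl | hl
    · exfalso
      have h5 : a₂ ++ [false] <+: a₂ ++ false :: B := ⟨B, by simp⟩
      have h6 : a₁ <+: a₂ ++ false :: B := ⟨false :: A, by rw [← h]⟩
      have hpf : a₂ ++ [false] <+: a₁ :=
        List.prefix_of_prefix_length_le h5 h6 (by simp; omega)
      exact no_strict_dyck_ext h₂ h₁ hpf
    · exact (hp.eq_of_length (le_antisymm hp.length_le hl)).symm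

theorem nil_cons_absurd {k : ℕ} {a x₁ x₂ : List Bool} {T : List (List Bool)}
    (ha : IsDyck m a) (hx₁ : IsDyck m x₁) (hx₂ : IsDyck m x₂) (hx₂ne : x₂ ≠ [])
    (hk : 1 ≤ k) (j : ℕ)
    (heq : x₁ ++ List.replicate k false
      = a ++ false :: (blocksW T ++ x₂ ++ List.replicate j false)) : False := by
  have hw1 : x₁ <+: x₁ ++ List.replicate k false := ⟨_, rfl⟩
  have hw2 : a <+: x₁ ++ List.replicate k false := ⟨_, heq.symm⟩
  rcases List.prefix_or_prefix_of_prefix hw1 hw2 with hp | hp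
  · rcases Nat.lt_or_ge x₁.length a.length with hl | hl
    · -- x₁ ++ [false] <+: a
      have h5 : x₁ ++ [false] <+: x₁ ++ List.replicate k false := by
        have h6 : List.replicate k false = [false] ++ List.replicate (k-1) false := by
          rw [show k = (k-1) + 1 by omega, List.replicate_succ]
          rfl
        rw [h6, ← List.append_assoc]
        exact ⟨_, rfl⟩
      have hpf : x₁ ++ [false] <+: a :=
        List.prefix_of_prefix_length_le h5 hw2 (by simp; omega)
      exact no_strict_dyck_ext hx₁ ha hpf
    · -- a = x₁ : then x₂ sits inside a replicate
      have hax : a = x₁ := (hp.eq_of_length (le_antisymm hp.length_le hl)).symm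
      subst hax
      have h7 : List.replicate k false = false :: (blocksW T ++ x₂ ++ List.replicate j false) := by
        have := heq
        rwa [List.append_cancel_left_eq] at this
      have htrue : true ∈ x₂ := by
        rw [← List.count_pos_iff]
        exact count_true_pos hx₂ hx₂ne
      have htrue2 : true ∈ List.replicate k false := by
        rw [h7]
        simp only [List.mem_cons, List.mem_append]
        tauto
      have := List.eq_of_mem_replicate htrue2
      simp at this
  · rcases Nat.lt_or_ge a.length x₁.length with hl | hl
    · have h5 : a ++ [false] <+: x₁ ++ List.replicate k false :=
        ⟨blocksW T ++ x₂ ++ List.replicate j false, by rw [heq]; simp⟩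
      have hpf : a ++ [false] <+: x₁ :=
        List.prefix_of_prefix_length_le h5 hw1 (by simp; omega)
      exact no_strict_dyck_ext ha hx₁ hpf
    · have hax : a = x₁ := hp.eq_of_length (le_antisymm hp.length_le hl)
      subst hax
      have h7 : List.replicate k false = false :: (blocksW T ++ x₂ ++ List.replicate j false) := by
        have := heq
        rwa [List.append_cancel_left_eq] at this
      have htrue : true ∈ x₂ := by
        rw [← List.count_pos_iff]
        exact count_true_pos hx₂ hx₂ne
      have htrue2 : true ∈ List.replicate k false := by
        rw [h7]
        simp only [List.mem_cons, List.mem_append]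
        tauto
      have := List.eq_of_mem_replicate htrue2
      simp at this

/-- injectivity of the block decomposition. -/
theorem jw_inj : ∀ (B₁ : List (List Bool)) {k : ℕ} (B₂ : List (List Bool)) {x₁ x₂ : List Bool},
    (∀ a ∈ B₁, IsDyck m a) → (∀ a ∈ B₂, IsDyck m a) →
    B₁.length ≤ k → B₂.length ≤ k →
    IsDyck m x₁ → IsDyck m x₂ → x₁ ≠ [] → x₂ ≠ [] →
    blocksW B₁ ++ x₁ ++ List.replicate (k - B₁.length) false
      = blocksW B₂ ++ x₂ ++ List.replicate (k - B₂.length) false →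
    B₁ = B₂ ∧ x₁ = x₂ := by
  intro B₁
  induction B₁ with
  | nil =>
    intro k B₂ x₁ x₂ hB₁ hB₂ hl₁ hl₂ hx₁ hx₂ hx₁ne hx₂ne heq
    cases B₂ with
    | nil =>
      simp only [blocksW_nil, List.nil_append, List.length_nil, Nat.sub_zero] at heq
      have hlen : x₁.length = x₂.length := by
        have := congrArg List.length heq
        simp at this
        omega
      exact ⟨rfl, (List.append_inj heq hlen).1⟩
    | cons b S =>
      exfalso
      simp only [blocksW_nil, List.nil_append, List.length_nil, Nat.sub_zero,
        blocksW_cons] at heq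
      have hk : 1 ≤ k := by simp at hl₂; omega
      refine nil_cons_absurd (T := S) (hB₂ b (by simp)) hx₁ hx₂ hx₂ne hk (k - (S.length + 1)) ?_
      rw [heq]
      simp [List.append_assoc]
  | cons a T ih =>
    intro k B₂ x₁ x₂ hB₁ hB₂ hl₁ hl₂ hx₁ hx₂ hx₁ne hx₂ne heq
    cases B₂ with
    | nil =>
      exfalso
      simp only [blocksW_nil, List.nil_append, List.length_nil, Nat.sub_zero,
        blocksW_cons] at heq
      have hk : 1 ≤ k := by simp at hl₁; omega
      refine nil_cons_absurd (T := T) (hB₁ a (by simp)) hx₂ hx₁ hx₁ne hk (k - (T.length + 1)) ?_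
      rw [← heq]
      simp [List.append_assoc]
    | cons b S =>
      rw [blocksW_cons, blocksW_cons] at heq
      have heq2 : a ++ false :: (blocksW T ++ x₁ ++ List.replicate (k - 1 - T.length) false)
          = b ++ false :: (blocksW S ++ x₂ ++ List.replicate (k - 1 - S.length) false) := by
        rw [show k - 1 - T.length = k - (a :: T).length from by simp; omega,
          show k - 1 - S.length = k - (b :: S).length from by simp; omega]
        simpa [List.append_assoc] using heq
      have hab : a = b := dyck_head_eq heq2 (hB₁ a (by simp)) (hB₂ b (by simp))
      subst hab
      have heq3 : blocksW T ++ x₁ ++ List.replicate (k - 1 - T.length) false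
          = blocksW S ++ x₂ ++ List.replicate (k - 1 - S.length) false := by
        have := heq2
        rw [List.append_cancel_left_eq] at this
        exact List.tail_eq_of_cons_eq this
      have hT : T.length ≤ k - 1 := by simp at hl₁; omega
      have hS : S.length ≤ k - 1 := by simp at hl₂; omega
      obtain ⟨hTS, hx⟩ := ih (k := k - 1) S (fun c hc => hB₁ c (by simp [hc]))
        (fun c hc => hB₂ c (by simp [hc])) hT hS hx₁ hx₂ hx₁ne hx₂ne heq3
      exact ⟨by rw [hTS], hx⟩

/-- the first factor of a star decomposition by a generator is unique. -/
theorem star_gen_inj {g₁ g₂ x₁ x₂ : List Bool} (hg₁ : IsGenerator m g₁) (hg₂ : IsGenerator m g₂)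
    (hx₁ : IsDyck m x₁) (hx₁ne : x₁ ≠ []) (hx₂ : IsDyck m x₂) (hx₂ne : x₂ ≠ [])
    (heq : _root_.star m g₁ x₁ = _root_.star m g₂ x₂) : g₁ = g₂ ∧ x₁ = x₂ := by
  obtain ⟨B₁, hB₁, hl₁, rfl⟩ := generator_blocks hg₁
  obtain ⟨B₂, hB₂, hl₂, rfl⟩ := generator_blocks hg₂
  rw [gen_star_form hl₁, gen_star_form hl₂] at heq
  have heq2 := List.tail_eq_of_cons_eq heq
  obtain ⟨hB, hx⟩ := jw_inj B₁ (k := m) B₂ hB₁ hB₂ hl₁ hl₂ hx₁ hx₂ hx₁ne hx₂ne heq2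
  exact ⟨by rw [hB], hx⟩

/-- length of a Dyck word. -/
theorem dyck_length {w : List Bool} (hw : IsDyck m w) : w.length = (m+1) * w.count true := by
  have h1 := cnt_len w
  have h2 := hw.1
  have h3 : (m+1) * w.count true = m * w.count true + w.count true := by ring
  omega

/-- uniqueness of the pair splitting given sizes. -/
theorem star_pair_aux {h₁ h₂ y₁ y₂ R₁ R₂ : List Bool} {f₁ f₂ : ℕ}
    (hh₁ : IsDyck m h₁) (hh₂ : IsDyck m h₂)
    (hy₁ : IsDyck m y₁) (hy₂ : IsDyck m y₂) (hy₂ne : y₂ ≠ [])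
    (hs₁ : h₁ = R₁ ++ true :: List.replicate f₁ false)
    (hs₂ : h₂ = R₂ ++ true :: List.replicate f₂ false)
    (hm₁ : m ≤ f₁) (hm₂ : m ≤ f₂)
    (hlen : h₁.length = h₂.length) (hylen : y₁.length = y₂.length)
    (heq : R₁ ++ y₁ ++ List.replicate (f₁ - m) false = R₂ ++ y₂ ++ List.replicate (f₂ - m) false)
    (hf : f₁ < f₂) : False := by
  have hR₁ : R₁.length + 1 + f₁ = h₁.length := by rw [hs₁]; simp; omega
  have hR₂ : R₂.length + 1 + f₂ = h₂.length := by rw [hs₂]; simp; omega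
  have hbal₁ : R₁.count false + f₁ = m * R₁.count true + m := by
    have := hh₁.1
    rw [hs₁] at this
    simp [List.count_append, List.count_cons, List.count_replicate, Nat.mul_add] at this
    omega
  have hbal₂ : R₂.count false + f₂ = m * R₂.count true + m := by
    have := hh₂.1
    rw [hs₂] at this
    simp [List.count_append, List.count_cons, List.count_replicate, Nat.mul_add] at this
    omega
  -- take the prefix of length R₁.length in both decompositions
  have htake1 : (R₁ ++ y₁ ++ List.replicate (f₁ - m) false).take R₁.length = R₁ := by
    rw [List.append_assoc, List.take_left' rfl]
  have htake2 : (R₂ ++ y₂ ++ List.replicate (f₂ - m) false).take R₁.length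
      = R₂ ++ (y₂ ++ List.replicate (f₂ - m) false).take (R₁.length - R₂.length) := by
    rw [List.append_assoc, List.take_append,
      List.take_of_length_le (by omega)]
  have hR₁eq : R₁ = R₂ ++ (y₂ ++ List.replicate (f₂ - m) false).take (R₁.length - R₂.length) := by
    rw [← htake2, ← heq, htake1]
  rcases le_or_gt (R₁.length - R₂.length) y₂.length with hcase | hcase
  · -- prefix lands inside y₂
    have hp : (y₂ ++ List.replicate (f₂ - m) false).take (R₁.length - R₂.length)
        = y₂.take (R₁.length - R₂.length) := by
      rw [List.take_append, Nat.sub_eq_zero_of_le hcase]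
      simp
    rw [hp] at hR₁eq
    obtain ⟨p, hp2, hR₁eq2⟩ : ∃ p, p <+: y₂ ∧ R₁ = R₂ ++ p :=
      ⟨_, List.take_prefix _ _, hR₁eq⟩
    have hppre := dpref hy₂ hp2
    have hc0 : R₁.count false = R₂.count false + p.count false := by
      rw [hR₁eq2]; simp [List.count_append]
    have hc1 : R₁.count true = R₂.count true + p.count true := by
      rw [hR₁eq2]; simp [List.count_append]
    have hmul : m * R₁.count true = m * R₂.count true + m * p.count true := by
      rw [hc1, Nat.mul_add]
    omega
  · -- prefix goes past y₂ : length contradiction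
    have hp : (y₂ ++ List.replicate (f₂ - m) false).take (R₁.length - R₂.length)
        = y₂ ++ List.replicate (min (R₁.length - R₂.length - y₂.length) (f₂ - m)) false := by
      rw [List.take_append, List.take_of_length_le (by omega),
        List.take_replicate]
    rw [hp] at hR₁eq
    obtain ⟨L, hR₁eq2⟩ : ∃ L, R₁ = R₂ ++ y₂ ++ List.replicate L false :=
      ⟨(R₁.length - R₂.length - y₂.length) ⊓ (f₂ - m), by
        rw [hR₁eq]; simp [List.append_assoc]⟩
    have hc0 : R₁.count false = R₂.count false + y₂.count false + L := by
      rw [hR₁eq2]; simp [List.count_append, List.count_replicate]; omega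
    have hc1 : R₁.count true = R₂.count true + y₂.count true := by
      rw [hR₁eq2]; simp [List.count_append, List.count_replicate]
    have hmul : m * R₁.count true = m * R₂.count true + m * y₂.count true := by
      rw [hc1, Nat.mul_add]
    have hL : R₁.length = R₂.length + y₂.length + L := by
      have h9 := congrArg List.length hR₁eq2
      simp at h9
      omega
    have hyb := hy₂.1
    have hy₂len : y₂.length ≥ 1 := by
      have := count_true_pos hy₂ hy₂ne
      have := cnt_len y₂
      omega
    omega

theorem star_pair_inj {h₁ h₂ y₁ y₂ : List Bool}
    (hh₁ : IsDyck m h₁) (hh₁ne : h₁ ≠ []) (hh₂ : IsDyck m h₂) (hh₂ne : h₂ ≠ [])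
    (hy₁ : IsDyck m y₁) (hy₁ne : y₁ ≠ []) (hy₂ : IsDyck m y₂) (hy₂ne : y₂ ≠ [])
    (hhc : h₁.count true = h₂.count true) (hyc : y₁.count true = y₂.count true)
    (heq : _root_.star m h₁ y₁ = _root_.star m h₂ y₂) : h₁ = h₂ ∧ y₁ = y₂ := by
  have hlen : h₁.length = h₂.length := by
    rw [dyck_length hh₁, dyck_length hh₂, hhc]
  have hylen : y₁.length = y₂.length := by
    rw [dyck_length hy₁, dyck_length hy₂, hyc]
  obtain ⟨R₁, f₁, hs₁, hfd₁, hm₁⟩ := dstructure hh₁ hh₁ne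
  obtain ⟨R₂, f₂, hs₂, hfd₂, hm₂⟩ := dstructure hh₂ hh₂ne
  rw [star_eq R₁ y₁ hs₁, star_eq R₂ y₂ hs₂] at heq
  rcases lt_trichotomy f₁ f₂ with hf | hf | hf
  · exact absurd (star_pair_aux hh₁ hh₂ hy₁ hy₂ hy₂ne hs₁ hs₂ hm₁ hm₂ hlen hylen heq hf)
      (by simp)
  · -- f₁ = f₂
    subst hf
    have hRlen : R₁.length = R₂.length := by
      have h1 : R₁.length + 1 + f₁ = h₁.length := by rw [hs₁]; simp; omega
      have h2 : R₂.length + 1 + f₁ = h₂.length := by rw [hs₂]; simp; omega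
      omega
    rw [List.append_assoc, List.append_assoc] at heq
    obtain ⟨hR, hrest⟩ := List.append_inj heq hRlen
    obtain ⟨hy, -⟩ := List.append_inj hrest hylen
    constructor
    · rw [hs₁, hs₂, hR]
    · exact hy
  · exact absurd (star_pair_aux hh₂ hh₁ hy₂ hy₁ hy₁ne hs₂ hs₁ hm₂ hm₁ hlen.symm hylen.symm
      heq.symm hf) (by simp)

end DyckAux

namespace DyckAux

open List

variable {m : ℕ}

theorem peak_unique {w : List Bool} (hw : IsDyck m w) (hc : w.count true = 1) :
    w = peakWord m := by
  have hne : w ≠ [] := ne_nil_of_count (by omega)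
  obtain ⟨R, t, hstr, hfd, hmt⟩ := dstructure hw hne
  have hcR : R.count true = 0 := by
    have h1 := hc
    rw [hstr] at h1
    simp [List.count_append, List.count_cons, List.count_replicate] at h1
    omega
  have hfR : R.count false = 0 := by
    have h1 := dpref hw (⟨true :: List.replicate t false, hstr.symm⟩ : R <+: w)
    have h2 : m * R.count true = 0 := by rw [hcR]; ring
    omega
  have hRnil : R = [] := by
    apply List.eq_nil_of_length_eq_zero
    have := cnt_len R
    omega
  have htm : t = m := by
    have h1 := hw.1
    rw [hstr, hRnil] at h1
    simp [List.count_cons, List.count_replicate] at h1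
    omega
  rw [hstr, hRnil, htm, peakWord]
  rfl

theorem gen_is_dyck {g : List Bool} (hg : IsGenerator m g) : IsDyck m g := by
  obtain ⟨B, hB, hl, rfl⟩ := generator_blocks hg
  exact gen_dyck hB hl

theorem gen_ne {g : List Bool} (hg : IsGenerator m g) : g ≠ [] := by
  obtain ⟨B, hB, hl, rfl⟩ := generator_blocks hg
  simp

theorem gen_two {g : List Bool} (hg : IsGenerator m g) : 2 ≤ g.count true := by
  obtain ⟨B, hB, hl, rfl⟩ := generator_blocks hg
  exact gen_count_two

theorem star_count' {a : List Bool} (x : List Bool) (ha : IsDyck m a) (hane : a ≠ []) :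
    (_root_.star m a x).count true + 1 = a.count true + x.count true := by
  obtain ⟨R, t, hstr, hfd, hmt⟩ := dstructure ha hane
  have h1 := star_count (x := x) hstr hmt
  omega

theorem interval_peak : IsInterval m (peakWord m, peakWord m) :=
  ⟨peak_dyck, peak_dyck, rfl, Relation.ReflTransGen.refl⟩

theorem interval_snd_ne {p : List Bool × List Bool} (hp : IsInterval m p) (hp1 : p.1 ≠ []) :
    p.2 ≠ [] :=
  ne_nil_of_count (by rw [← hp.2.2.1]; exact count_true_pos hp.1 hp1)

theorem istar_closure {p q : List Bool × List Bool} (hp : IsInterval m p) (hp1 : p.1 ≠ [])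
    (hq : IsInterval m q) (hq1 : q.1 ≠ []) :
    IsInterval m (istar m p q) ∧ (istar m p q).1 ≠ [] := by
  obtain ⟨hp1d, hp2d, hpc, hple⟩ := hp
  obtain ⟨hq1d, hq2d, hqc, hqle⟩ := hq
  have hp2ne : p.2 ≠ [] := ne_nil_of_count (by rw [← hpc]; exact count_true_pos hp1d hp1)
  have hq2ne : q.2 ≠ [] := ne_nil_of_count (by rw [← hqc]; exact count_true_pos hq1d hq1)
  refine ⟨⟨star_dyck hp1d hp1 hq1d, star_dyck hp2d hp2ne hq2d, ?_, ?_⟩, star_ne hq1⟩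
  · have h1 := star_count' q.1 hp1d hp1
    have h2 := star_count' q.2 hp2d hp2ne
    simp only [istar]
    omega
  · simp only [istar]
    exact Relation.ReflTransGen.trans (le_star_left hp1d hp1 hq1d hq1 hple)
      (le_star_right hp2d hp2ne hq1d hqle)

theorem istar_unit_left {p : List Bool × List Bool} : istar m (peakWord m, peakWord m) p = p := by
  cases p with
  | mk a b => simp [istar, star_peak_left]

theorem istar_unit_right {p : List Bool × List Bool} (hp : IsInterval m p) (hp1 : p.1 ≠ []) :
    istar m p (peakWord m, peakWord m) = p := by
  have hp2ne := interval_snd_ne hp hp1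
  cases p with
  | mk a b =>
    simp only [istar]
    rw [star_peak_right hp.1 hp1, star_peak_right hp.2.1 hp2ne]

theorem istar_assoc {p q : List Bool × List Bool} (r : List Bool × List Bool)
    (hp : IsInterval m p) (hp1 : p.1 ≠ []) (hq : IsInterval m q) (hq1 : q.1 ≠ []) :
    istar m (istar m p q) r = istar m p (istar m q r) := by
  have hp2ne := interval_snd_ne hp hp1
  have hq2ne := interval_snd_ne hq hq1
  simp only [istar]
  rw [star_assoc hp.1 hp1 hq.1 hq1, star_assoc hp.2.1 hp2ne hq.2.1 hq2ne]

theorem foldr_interval {L : List (List Bool × List Bool)} (hL : ∀ g ∈ L, IsGenInterval m g) :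
    IsInterval m (L.foldr (istar m) (peakWord m, peakWord m)) ∧
    (L.foldr (istar m) (peakWord m, peakWord m)).1 ≠ [] := by
  induction L with
  | nil => exact ⟨interval_peak, peak_ne⟩
  | cons g T ih =>
    have hg := hL g (by simp)
    have ihT := ih (fun a ha => hL a (by simp [ha]))
    simp only [List.foldr_cons]
    exact istar_closure hg.2 (gen_ne hg.1) ihT.1 ihT.2

theorem factor_unique : ∀ (L₁ L₂ : List (List Bool × List Bool)),
    (∀ g ∈ L₁, IsGenInterval m g) → (∀ g ∈ L₂, IsGenInterval m g) →
    L₁.foldr (istar m) (peakWord m, peakWord m) = L₂.foldr (istar m) (peakWord m, peakWord m) →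
    L₁ = L₂ := by
  intro L₁
  induction L₁ with
  | nil =>
    intro L₂ h₁ h₂ heq
    cases L₂ with
    | nil => rfl
    | cons g T =>
      exfalso
      have hg := h₂ g (by simp)
      have hT := foldr_interval (L := T) (fun a ha => h₂ a (by simp [ha]))
      have hgd : IsDyck m g.1 := gen_is_dyck hg.1
      have h3 : peakWord m = _root_.star m g.1 (T.foldr (istar m) (peakWord m, peakWord m)).1 :=
        congrArg Prod.fst heq
      have h4 := star_count' (T.foldr (istar m) (peakWord m, peakWord m)).1 hgd (gen_ne hg.1)
      have h5 := gen_two hg.1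
      have h6 := count_true_pos hT.1.1 hT.2
      have h7 : (peakWord m).count true = 1 := peak_count_true
      rw [h3] at h7
      omega
  | cons g T ih =>
    intro L₂ h₁ h₂ heq
    cases L₂ with
    | nil =>
      exfalso
      have hg := h₁ g (by simp)
      have hT := foldr_interval (L := T) (fun a ha => h₁ a (by simp [ha]))
      have hgd : IsDyck m g.1 := gen_is_dyck hg.1
      have h3 : peakWord m = _root_.star m g.1 (T.foldr (istar m) (peakWord m, peakWord m)).1 :=
        (congrArg Prod.fst heq).symm
      have h4 := star_count' (T.foldr (istar m) (peakWord m, peakWord m)).1 hgd (gen_ne hg.1)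
      have h5 := gen_two hg.1
      have h6 := count_true_pos hT.1.1 hT.2
      have h7 : (peakWord m).count true = 1 := peak_count_true
      rw [h3] at h7
      omega
    | cons g' T' =>
      have hg := h₁ g (by simp)
      have hg' := h₂ g' (by simp)
      have hT := foldr_interval (L := T) (fun a ha => h₁ a (by simp [ha]))
      have hT' := foldr_interval (L := T') (fun a ha => h₂ a (by simp [ha]))
      have h1eq : _root_.star m g.1 (T.foldr (istar m) (peakWord m, peakWord m)).1
          = _root_.star m g'.1 (T'.foldr (istar m) (peakWord m, peakWord m)).1 :=
        congrArg Prod.fst heq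
      have h2eq : _root_.star m g.2 (T.foldr (istar m) (peakWord m, peakWord m)).2
          = _root_.star m g'.2 (T'.foldr (istar m) (peakWord m, peakWord m)).2 :=
        congrArg Prod.snd heq
      obtain ⟨hgeq1, hXeq1⟩ := star_gen_inj hg.1 hg'.1 hT.1.1 hT.2 hT'.1.1 hT'.2 h1eq
      have hg2ne : g.2 ≠ [] := interval_snd_ne hg.2 (gen_ne hg.1)
      have hg'2ne : g'.2 ≠ [] := interval_snd_ne hg'.2 (gen_ne hg'.1)
      have hX2ne : (T.foldr (istar m) (peakWord m, peakWord m)).2 ≠ [] :=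
        interval_snd_ne hT.1 hT.2
      have hX'2ne : (T'.foldr (istar m) (peakWord m, peakWord m)).2 ≠ [] :=
        interval_snd_ne hT'.1 hT'.2
      have hcg : g.2.count true = g'.2.count true := by
        have a1 := hg.2.2.2.1
        have a2 := hg'.2.2.2.1
        rw [← a1, ← a2, hgeq1]
      have hcX : (T.foldr (istar m) (peakWord m, peakWord m)).2.count true
          = (T'.foldr (istar m) (peakWord m, peakWord m)).2.count true := by
        have a1 := hT.1.2.2.1
        have a2 := hT'.1.2.2.1
        rw [← a1, ← a2, hXeq1]
      obtain ⟨hgeq2, hXeq2⟩ := star_pair_inj hg.2.2.1 hg2ne hg'.2.2.1 hg'2ne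
        hT.1.2.1 hX2ne hT'.1.2.1 hX'2ne hcg hcX h2eq
      have hgg : g = g' := Prod.ext_iff.mpr ⟨hgeq1, hgeq2⟩
      have hXX : T.foldr (istar m) (peakWord m, peakWord m)
          = T'.foldr (istar m) (peakWord m, peakWord m) := Prod.ext_iff.mpr ⟨hXeq1, hXeq2⟩
      rw [hgg, ih T' (fun a ha => h₁ a (by simp [ha])) (fun a ha => h₂ a (by simp [ha])) hXX]

theorem factor_exists : ∀ (n : ℕ) (p : List Bool × List Bool), p.1.count true ≤ n →
    IsInterval m p → p.1 ≠ [] →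
    ∃ L : List (List Bool × List Bool), (∀ g ∈ L, IsGenInterval m g) ∧
      L.foldr (istar m) (peakWord m, peakWord m) = p := by
  intro n
  induction n with
  | zero =>
    intro p hn hp hp1
    exfalso
    have := count_true_pos hp.1 hp1
    omega
  | succ n ih =>
    intro p hn hp hp1
    by_cases hpeak : p.1 = peakWord m
    · have hc2 : p.2.count true = 1 := by
        rw [← hp.2.2.1, hpeak, peak_count_true]
      have hp2 : p.2 = peakWord m := peak_unique hp.2.1 hc2
      refine ⟨[], ?_, ?_⟩
      · intro a ha
        simp at ha
      · show (peakWord m, peakWord m) = p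
        nth_rewrite 2 [← hp2]
        nth_rewrite 1 [← hpeak]
        exact Prod.mk.eta
    · obtain ⟨g, x, hgen, hxd, hxne, hveq, hlt⟩ := exists_factor hp.1 hp1 hpeak
      have hled : GreedyLe m (_root_.star m g x) p.2 := by
        rw [← hveq]
        exact hp.2.2.2
      obtain ⟨h₂, y, hh₂d, hyd, hgle, hxle, hp2eq⟩ :=
        le_star_split (gen_is_dyck hgen) (gen_ne hgen) hxd hxne hled
      have hcg := (le_dyck (gen_is_dyck hgen) hgle).2.1
      have hcx := (le_dyck hxd hxle).2.1
      have hint : IsInterval m (x, y) := ⟨hxd, hyd, hcx, hxle⟩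
      have hxn : x.count true ≤ n := by omega
      obtain ⟨L', hL', hfold⟩ := ih (x, y) hxn hint hxne
      refine ⟨(g, h₂) :: L', ?_, ?_⟩
      · intro a ha
        rcases List.mem_cons.mp ha with rfl | ha2
        · exact ⟨hgen, gen_is_dyck hgen, hh₂d, hcg, hgle⟩
        · exact hL' a ha2
      · simp only [List.foldr_cons, hfold]
        simp only [istar]
        rw [← hveq, ← hp2eq]

end DyckAux

/-- Greedy `m`-Tamari intervals of positive size, with the product
`[v₁,w₁]*[v₂,w₂] = [v₁*v₂, w₁*w₂]` (well defined since `v₁ ≤ w₁` and `v₂ ≤ w₂` imply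
`v₁*v₂ ≤ w₁*w₂`), form a monoid with unit `[1·0^m, 1·0^m]` which is free on the
generator intervals: every interval of positive size factors uniquely. -/
theorem interval_star_free_monoid (m : ℕ) (hm : 1 ≤ m) :
    -- well-definedness / closure
    (∀ p q : List Bool × List Bool, IsInterval m p → p.1 ≠ [] →
        IsInterval m q → q.1 ≠ [] →
        IsInterval m (istar m p q) ∧ (istar m p q).1 ≠ []) ∧
    -- unit laws
    (∀ p : List Bool × List Bool, IsInterval m p → p.1 ≠ [] →
        istar m (peakWord m, peakWord m) p = p ∧ istar m p (peakWord m, peakWord m) = p) ∧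
    -- associativity
    (∀ p q r : List Bool × List Bool, IsInterval m p → p.1 ≠ [] →
        IsInterval m q → q.1 ≠ [] → IsInterval m r → r.1 ≠ [] →
        istar m (istar m p q) r = istar m p (istar m q r)) ∧
    -- unique factorisation into generator intervals
    (∀ p : List Bool × List Bool, IsInterval m p → p.1 ≠ [] →
        ∃! L : List (List Bool × List Bool),
          (∀ g ∈ L, IsGenInterval m g) ∧
          L.foldr (istar m) (peakWord m, peakWord m) = p) := by
  refine ⟨?_, ?_, ?_, ?_⟩
  · intro p q hp hp1 hq hq1
    exact DyckAux.istar_closure hp hp1 hq hq1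
  · intro p hp hp1
    exact ⟨DyckAux.istar_unit_left, DyckAux.istar_unit_right hp hp1⟩
  · intro p q r hp hp1 hq hq1 hr hr1
    exact DyckAux.istar_assoc r hp hp1 hq hq1
  · intro p hp hp1
    obtain ⟨L, hL, hfold⟩ := DyckAux.factor_exists (p.1.count true) p (le_refl _) hp hp1
    refine ⟨L, ⟨hL, hfold⟩, ?_⟩
    intro L' hL'
    exact DyckAux.factor_unique L' L hL'.1 hL (by rw [hL'.2, hfold])
end
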